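/- arXiv:math/0507485 — 2 statements merged into one kernel-verified Lean document; each statement's English description precedes it below -/
import Mathlib

section
/- (Descent Lemma) Let C: w = v_0 ⋗ v_1 ⋗ … ⋗ v_d = u be a maximal chain of an interval [u,w] of the composition poset ℙ*, with label sequence l(C) = (l_1,…,l_d). If v_j (0 < j < d) is a descent of C, i.e., l_j > l_{j+1}, then the singleton {v_j} is a minimal skipped interval of C. -/
/-! Sagan–Vatter, Descent Lemma for the composition poset ℙ*. -/

/-- The underlying word of a composition, as a list of natural numbers. -/
def coes (w : List ℕ+) : List ℕ := w.map (fun x => (x : ℕ))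

/-- The order on the composition poset ℙ*: `u ≤ w` iff `w` has a subsequence of
length `|u|` dominating `u` entrywise. -/
def CompLE (u w : List ℕ+) : Prop := List.SublistForall₂ (· ≤ ·) u w

/-- `η` is an embedding of the composition `u` into the word `W` over ℕ:
it has length `|W|`, its nonzero entries read left to right form `u`, and
`η(i) ≤ W(i)` for all `i`. -/
def IsEmb (u : List ℕ+) (W η : List ℕ) : Prop :=
  η.length = W.length ∧
  η.filter (fun x => decide (x ≠ 0)) = coes u ∧
  ∀ i, η.getD i 0 ≤ W.getD i 0

/-- `[r,t]` is a run of `k`'s in the word `W`. -/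
def IsRun (W : List ℕ) (k r t : ℕ) : Prop :=
  r ≤ t ∧ t < W.length ∧ (∀ i, r ≤ i → i ≤ t → W.getD i 0 = k) ∧
  (r = 0 ∨ W.getD (r - 1) 0 ≠ k) ∧ (t + 1 = W.length ∨ W.getD (t + 1) 0 ≠ k)

/-- A normal embedding of `u` into the word `W`. -/
def NormalEmb (u : List ℕ+) (W η : List ℕ) : Prop :=
  IsEmb u W η ∧
  (∀ i, i < W.length →
    η.getD i 0 = W.getD i 0 ∨ η.getD i 0 = W.getD i 0 - 1 ∨ η.getD i 0 = 0) ∧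
  ∀ k r t, IsRun W k r t →
    (k = 1 → ∀ i, r < i → i ≤ t → η.getD i 0 ≠ 0) ∧
    (2 ≤ k → η.getD r 0 ≠ 0)

/-- `w` covers `u` in ℙ*: `u < w` and there is no `v` with `u < v < w`. -/
def CompCovBy (w u : List ℕ+) : Prop :=
  CompLE u w ∧ u ≠ w ∧ ∀ v : List ℕ+, CompLE u v → CompLE v w → v = u ∨ v = w

/-- A maximal chain of the interval `[u,w]` in ℙ*: a saturated chain
`w = v₀ ⋗ v₁ ⋗ … ⋗ v_d = u`, recorded as the list `[v₀, …, v_d]`. -/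
def MaxChain (u w : List ℕ+) (vs : List (List ℕ+)) : Prop :=
  vs.head? = some w ∧ vs.getLast? = some u ∧ List.Chain' CompCovBy vs

/-- `e` is an expansion of the composition `x`: a word over ℕ whose nonzero
entries, read left to right, form `x`. -/
def IsExpansion (x : List ℕ+) (e : List ℕ) : Prop :=
  e.filter (fun a => decide (a ≠ 0)) = coes x

/-- `e'` is obtained from the word `e` by decreasing position `i` by `1`. -/
def Step (e e' : List ℕ) (i : ℕ) : Prop :=
  e'.length = e.length ∧ (∀ j, j ≠ i → e'[j]? = e[j]?) ∧
  ∃ a : ℕ, e[i]? = some (a + 1) ∧ e'[i]? = some a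

/-- `ls` is the label sequence of the maximal chain `vs = [v₀, …, v_d]`
starting at `w`, with associated embedding sequence `es = [η_{v₀}, …, η_{v_d}]`:
`η_{v₀} = w`, each `η_{v_{j+1}}` is the (unique) normal embedding of `v_{j+1}`
into `η_{v_j}`, and the label `ls(j)` is the position decreased in passing from
`η_{v_j}` to `η_{v_{j+1}}`. -/
def ChainLabels (w : List ℕ+) (vs : List (List ℕ+)) (es : List (List ℕ))
    (ls : List ℕ) : Prop :=
  es.length = vs.length ∧ ls.length + 1 = vs.length ∧
  es[0]? = some (coes w) ∧
  ∀ (j : ℕ) (e e' : List ℕ) (v' : List ℕ+) (l : ℕ),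
    es[j]? = some e → es[j + 1]? = some e' → vs[j + 1]? = some v' →
    ls[j]? = some l → NormalEmb v' e e' ∧ Step e e' l

/-- The vertex set `C(v_i, v_j) = {v_{i+1}, …, v_{j-1}}` of the open interval
of the chain `vs` between indices `i` and `j`. -/
def IntervalSet (vs : List (List ℕ+)) (i j : ℕ) : Set (List ℕ+) :=
  {x | ∃ m : ℕ, i < m ∧ m < j ∧ vs[m]? = some x}

/-- `I` is a skipped interval of the maximal chain `vs` (with label sequence
`ls`) in `[u,w]`: `I` is a nonempty set of the form `C(v_i, v_j)`, and there
is a maximal chain `C'` of `[u,w]` preceding `C` in the lexicographic order on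
label sequences with `C - I ⊆ C'`. -/
def Skipped (u w : List ℕ+) (vs : List (List ℕ+)) (ls : List ℕ)
    (I : Set (List ℕ+)) : Prop :=
  (∃ i j : ℕ, j ≤ ls.length ∧ I = IntervalSet vs i j) ∧ I.Nonempty ∧
  ∃ (vs' : List (List ℕ+)) (es' : List (List ℕ)) (ls' : List ℕ),
    MaxChain u w vs' ∧ ChainLabels w vs' es' ls' ∧
    List.Lex (· < ·) ls' ls ∧
    ∀ x ∈ vs, x ∉ I → x ∈ vs'

/-- `I` is a minimal skipped interval (MSI) of the chain `vs`: a skipped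
interval properly containing no other skipped interval. -/
def IsMSI (u w : List ℕ+) (vs : List (List ℕ+)) (ls : List ℕ)
    (I : Set (List ℕ+)) : Prop :=
  Skipped u w vs ls I ∧ ∀ I' : Set (List ℕ+), Skipped u w vs ls I' → ¬ I' ⊂ I

namespace SV

lemma getElem?_append_cons (A : List ℕ) (c : ℕ) (B : List ℕ) (j : ℕ) :
    (A ++ c :: B)[j]? = if j < A.length then A[j]?
      else if j = A.length then some c else B[j - A.length - 1]? := by
  rcases lt_trichotomy j A.length with h | h | h
  · simp [List.getElem?_append_left h, h]
  · subst h
    simp [List.getElem?_append_right (le_refl _)]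
  · rw [List.getElem?_append_right (le_of_lt h)]
    have h1 : j ≠ A.length := Nat.ne_of_gt h
    have h2 : ¬ j < A.length := not_lt_of_gt h
    simp only [if_neg h2, if_neg h1]
    have : j - A.length = (j - A.length - 1) + 1 := by omega
    rw [this]
    simp

lemma getD0 (e : List ℕ) (m : ℕ) : e.getD m 0 = (e[m]?).getD 0 :=
  List.getD_eq_getElem?_getD

lemma coes_append (a b : List ℕ+) : coes (a ++ b) = coes a ++ coes b := by
  simp [coes]

lemma coes_cons (k : ℕ+) (q : List ℕ+) : coes (k :: q) = (k : ℕ) :: coes q := rfl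

lemma coes_inj : ∀ {a b : List ℕ+}, coes a = coes b → a = b
  | [], [], _ => rfl
  | [], _ :: _, h => by simp [coes] at h
  | _ :: _, [], h => by simp [coes] at h
  | x :: a, y :: b, h => by
    rw [coes_cons, coes_cons] at h
    obtain ⟨h1, h2⟩ := List.cons.inj h
    rw [PNat.coe_injective h1, coes_inj h2]

lemma filter_coes (x : List ℕ+) :
    (coes x).filter (fun a => decide (a ≠ 0)) = coes x := by
  induction x with
  | nil => rfl
  | cons k q ih =>
    rw [coes_cons, List.filter_cons]
    have hk : (k : ℕ) ≠ 0 := by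
      have : (0:ℕ) < (k:ℕ) := k.2
      omega
    have hd : (decide ((k:ℕ) ≠ 0)) = true := by simp [hk]
    rw [if_pos hd, ih]

def csum (x : List ℕ+) : ℕ := (coes x).sum

lemma csum_append (a b : List ℕ+) : csum (a ++ b) = csum a + csum b := by
  simp [csum, coes_append]

lemma csum_cons (k : ℕ+) (q : List ℕ+) : csum (k :: q) = (k : ℕ) + csum q := by
  simp [csum, coes_cons]

lemma csum_eq_zero {x : List ℕ+} (h : csum x = 0) : x = [] := by
  cases x with
  | nil => rfl
  | cons k q =>
    rw [csum_cons] at h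
    have : (0:ℕ) < (k:ℕ) := k.2
    omega

lemma compLE_refl (x : List ℕ+) : CompLE x x := by
  induction x with
  | nil => exact List.SublistForall₂.nil
  | cons k q ih => exact List.SublistForall₂.cons (le_refl k) ih

lemma compLE_append_left (p : List ℕ+) {a b : List ℕ+} (h : CompLE a b) :
    CompLE (p ++ a) (p ++ b) := by
  induction p with
  | nil => exact h
  | cons k q ih => exact List.SublistForall₂.cons (le_refl k) ih

lemma compLE_sum {u w : List ℕ+} (h : CompLE u w) : csum u ≤ csum w := by
  induction h with
  | nil => exact Nat.zero_le _
  | cons hab _ ih =>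
    rw [csum_cons, csum_cons]
    exact Nat.add_le_add hab ih
  | @cons_right a l1 l2 _ ih =>
    rw [csum_cons]
    have : (0:ℕ) < (a:ℕ) := a.2
    omega

lemma compLE_sum_eq {u w : List ℕ+} (h : CompLE u w) (hs : csum u = csum w) :
    u = w := by
  induction h with
  | nil => exact (csum_eq_zero hs.symm).symm
  | @cons a b l1 l2 hab h ih =>
    rw [csum_cons, csum_cons] at hs
    have h1 := compLE_sum h
    have hab2 : (a:ℕ) ≤ (b:ℕ) := hab
    have hab' : (a : ℕ) = (b : ℕ) := by omega
    have : a = b := PNat.coe_injective hab'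
    subst this
    rw [ih (by omega)]
  | @cons_right a l1 l2 h ih =>
    have h1 := compLE_sum h
    rw [csum_cons] at hs
    have : (0:ℕ) < (a:ℕ) := a.2
    omega

def DecAt (x y : List ℕ+) : Prop :=
  ∃ (p q : List ℕ+) (k : ℕ+), x = p ++ k :: q ∧
    (((k : ℕ) = 1 ∧ y = p ++ q) ∨ ∃ k' : ℕ+, (k' : ℕ) + 1 = (k : ℕ) ∧ y = p ++ k' :: q)

lemma decAt_cons (k : ℕ+) {x y : List ℕ+} (h : DecAt x y) : DecAt (k :: x) (k :: y) := by
  obtain ⟨p, q, K, hx, hy⟩ := h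
  refine ⟨k :: p, q, K, by rw [hx]; rfl, ?_⟩
  rcases hy with ⟨h1, h2⟩ | ⟨k', h1, h2⟩
  · exact Or.inl ⟨h1, by rw [h2]; rfl⟩
  · exact Or.inr ⟨k', h1, by rw [h2]; rfl⟩

lemma decAt_csum {x y : List ℕ+} (h : DecAt x y) : csum x = csum y + 1 := by
  obtain ⟨p, q, K, hx, hy⟩ := h
  subst hx
  rcases hy with ⟨h1, h2⟩ | ⟨k', h1, h2⟩ <;> subst h2 <;>
    simp [csum_append, csum_cons] <;> omega

lemma decAt_le {x y : List ℕ+} (h : DecAt x y) : CompLE y x := by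
  obtain ⟨p, q, K, hx, hy⟩ := h
  subst hx
  rcases hy with ⟨h1, h2⟩ | ⟨k', h1, h2⟩ <;> subst h2
  · exact compLE_append_left p (List.SublistForall₂.cons_right (compLE_refl q))
  · refine compLE_append_left p (List.SublistForall₂.cons ?_ (compLE_refl q))
    show (k' : ℕ) ≤ (K : ℕ)
    omega

lemma decAt_cov {x y : List ℕ+} (h : DecAt x y) : CompCovBy x y := by
  have hs := decAt_csum h
  refine ⟨decAt_le h, ?_, ?_⟩
  · intro he; rw [he] at hs; omega
  · intro v h1 h2
    have s1 := compLE_sum h1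
    have s2 := compLE_sum h2
    rcases Nat.lt_or_ge (csum v) (csum x) with hl | hl
    · exact Or.inl (compLE_sum_eq h1 (by omega)).symm
    · exact Or.inr (compLE_sum_eq h2 (by omega))

lemma exists_decAt_of_lt {y x : List ℕ+} (h : CompLE y x) :
    y ≠ x → ∃ z, DecAt x z ∧ CompLE y z := by
  induction h with
  | @nil l =>
    intro hne
    cases l with
    | nil => exact absurd rfl hne
    | cons K xs =>
      by_cases hK : (K : ℕ) = 1
      · exact ⟨xs, ⟨[], xs, K, rfl, Or.inl ⟨hK, rfl⟩⟩, List.SublistForall₂.nil⟩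
      · have hK2 : 2 ≤ (K : ℕ) := by have : (0:ℕ) < (K:ℕ) := K.2; omega
        exact ⟨(⟨(K:ℕ) - 1, by omega⟩ : ℕ+) :: xs,
          ⟨[], xs, K, rfl, Or.inr ⟨⟨(K:ℕ) - 1, by omega⟩, by simp; omega, rfl⟩⟩,
          List.SublistForall₂.nil⟩
  | @cons a b l1 l2 hab hsub ih =>
    intro hne
    by_cases heq : a = b
    · subst heq
      have hne2 : l1 ≠ l2 := fun hc => hne (by rw [hc])
      obtain ⟨z, hz1, hz2⟩ := ih hne2
      exact ⟨a :: z, decAt_cons a hz1, List.SublistForall₂.cons (le_refl a) hz2⟩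
    · have hab2 : (a : ℕ) ≤ (b : ℕ) := hab
      have halt : (a : ℕ) < (b : ℕ) := by
        rcases lt_or_eq_of_le hab2 with h | h
        · exact h
        · exact absurd (PNat.coe_injective h) heq
      have ha1 : (1:ℕ) ≤ (a : ℕ) := a.2
      refine ⟨(⟨(b:ℕ) - 1, by omega⟩ : ℕ+) :: l2,
        ⟨[], l2, b, rfl, Or.inr ⟨⟨(b:ℕ) - 1, by omega⟩, by simp; omega, rfl⟩⟩,
        List.SublistForall₂.cons ?_ hsub⟩
      show (a : ℕ) ≤ (b : ℕ) - 1
      omega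
  | @cons_right b l1 l2 hsub ih =>
    intro _
    by_cases hb : (b : ℕ) = 1
    · exact ⟨l2, ⟨[], l2, b, rfl, Or.inl ⟨hb, rfl⟩⟩, hsub⟩
    · have hb2 : 2 ≤ (b : ℕ) := by have : (0:ℕ) < (b:ℕ) := b.2; omega
      exact ⟨(⟨(b:ℕ) - 1, by omega⟩ : ℕ+) :: l2,
        ⟨[], l2, b, rfl, Or.inr ⟨⟨(b:ℕ) - 1, by omega⟩, by simp; omega, rfl⟩⟩,
        List.SublistForall₂.cons_right hsub⟩

lemma cov_decAt {x y : List ℕ+} (h : CompCovBy x y) : DecAt x y := by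
  obtain ⟨hle, hne, hmin⟩ := h
  obtain ⟨z, hz1, hz2⟩ := exists_decAt_of_lt hle hne
  have hzx : z ≠ x := by
    intro hc
    have := decAt_csum hz1
    rw [hc] at this
    omega
  rcases hmin z hz2 (decAt_le hz1) with h | h
  · rw [← h]; exact hz1
  · exact absurd h hzx


lemma run_norm_of_ne (e η : List ℕ) (i : ℕ)
    (hoff : ∀ m, m ≠ i → η.getD m 0 = e.getD m 0) (hi : η.getD i 0 ≠ 0) :
    ∀ k r t, IsRun e k r t →
      (k = 1 → ∀ m, r < m → m ≤ t → η.getD m 0 ≠ 0) ∧ (2 ≤ k → η.getD r 0 ≠ 0) := by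
  intro k r t ⟨hrt, htl, hconst, _, _⟩
  constructor
  · intro hk m h1 h2
    by_cases hm : m = i
    · rw [hm]; exact hi
    · rw [hoff m hm, hconst m (by omega) h2, hk]; omega
  · intro hk
    by_cases hr : r = i
    · rw [hr]; exact hi
    · rw [hoff r hr, hconst r (le_refl r) hrt]; omega

lemma run_norm_of_del (e η : List ℕ) (i : ℕ)
    (hoff : ∀ m, m ≠ i → η.getD m 0 = e.getD m 0) (hi : e.getD i 0 = 1)
    (hstart : i = 0 ∨ e.getD (i - 1) 0 ≠ 1) :
    ∀ k r t, IsRun e k r t →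
      (k = 1 → ∀ m, r < m → m ≤ t → η.getD m 0 ≠ 0) ∧ (2 ≤ k → η.getD r 0 ≠ 0) := by
  intro k r t ⟨hrt, htl, hconst, _, _⟩
  constructor
  · intro hk m h1 h2
    by_cases hm : m = i
    · subst hm
      exfalso
      rcases hstart with h0 | hne
      · omega
      · have h5 : e.getD (m - 1) 0 = k := hconst (m - 1) (by omega) (by omega)
        rw [hk] at h5
        exact hne h5
    · rw [hoff m hm, hconst m (by omega) h2, hk]; omega
  · intro hk
    have hr : r ≠ i := by
      intro hc
      have := hconst r (le_refl r) hrt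
      rw [hc, hi] at this
      omega
    rw [hoff r hr, hconst r (le_refl r) hrt]; omega

lemma run_back (e : List ℕ) : ∀ i, ∃ r, r ≤ i ∧
    (∀ m, r ≤ m → m ≤ i → e.getD m 0 = e.getD i 0) ∧
    (r = 0 ∨ e.getD (r - 1) 0 ≠ e.getD i 0) := by
  intro i
  induction i with
  | zero =>
    refine ⟨0, le_refl 0, ?_, Or.inl rfl⟩
    intro m h1 h2
    have : m = 0 := by omega
    rw [this]
  | succ i ih =>
    by_cases he : e.getD i 0 = e.getD (i + 1) 0
    · obtain ⟨r, h1, h2, h3⟩ := ih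
      refine ⟨r, by omega, ?_, ?_⟩
      · intro m hm1 hm2
        by_cases hmi : m = i + 1
        · rw [hmi]
        · rw [h2 m hm1 (by omega), he]
      · rcases h3 with h | h
        · exact Or.inl h
        · exact Or.inr (by rw [← he]; exact h)
    · exact ⟨i + 1, le_refl _, fun m h1 h2 => by
        have : m = i + 1 := by omega
        rw [this], Or.inr (by simpa using he)⟩

lemma run_fwd (e : List ℕ) : ∀ n i, e.length ≤ i + n → i < e.length →
    ∃ t, i ≤ t ∧ t < e.length ∧
    (∀ m, i ≤ m → m ≤ t → e.getD m 0 = e.getD i 0) ∧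
    (t + 1 = e.length ∨ e.getD (t + 1) 0 ≠ e.getD i 0) := by
  intro n
  induction n with
  | zero => intro i h1 h2; omega
  | succ n ih =>
    intro i h1 h2
    by_cases hend : i + 1 = e.length
    · exact ⟨i, le_refl _, h2, fun m hm1 hm2 => by
        have : m = i := by omega
        rw [this], Or.inl hend⟩
    · by_cases he : e.getD (i + 1) 0 = e.getD i 0
      · obtain ⟨t, ht1, ht2, ht3, ht4⟩ := ih (i + 1) (by omega) (by omega)
        refine ⟨t, by omega, ht2, ?_, ?_⟩
        · intro m hm1 hm2
          by_cases hmi : m = i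
          · rw [hmi]
          · rw [ht3 m (by omega) hm2, he]
        · rcases ht4 with h | h
          · exact Or.inl h
          · exact Or.inr (by rw [← he]; exact h)
      · exact ⟨i, le_refl _, h2, fun m hm1 hm2 => by
          have : m = i := by omega
          rw [this], Or.inr he⟩

lemma run_exists (e : List ℕ) (i : ℕ) (h : i < e.length) :
    ∃ r t, IsRun e (e.getD i 0) r t ∧ r ≤ i ∧ i ≤ t := by
  obtain ⟨r, hr1, hr2, hr3⟩ := run_back e i
  obtain ⟨t, ht1, ht2, ht3, ht4⟩ := run_fwd e e.length i (by omega) h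
  refine ⟨r, t, ⟨by omega, ht2, ?_, hr3, ht4⟩, hr1, ht1⟩
  intro m hm1 hm2
  rcases le_or_gt m i with hmi | hmi
  · exact hr2 m hm1 hmi
  · exact ht3 m (by omega) hm2


lemma getElem?_mid (A : List ℕ) (c : ℕ) (B : List ℕ) :
    (A ++ c :: B)[A.length]? = some c := by
  rw [getElem?_append_cons]
  simp

lemma getElem?_off (A : List ℕ) (c c' : ℕ) (B : List ℕ) (m : ℕ) (h : m ≠ A.length) :
    (A ++ c :: B)[m]? = (A ++ c' :: B)[m]? := by
  rw [getElem?_append_cons, getElem?_append_cons]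
  by_cases h1 : m < A.length
  · rw [if_pos h1, if_pos h1]
  · rw [if_neg h1, if_neg h1, if_neg h, if_neg h]

lemma getD_mid (A : List ℕ) (c : ℕ) (B : List ℕ) :
    (A ++ c :: B).getD A.length 0 = c := by
  rw [getD0, getElem?_mid]; rfl

lemma getD_off (A : List ℕ) (c c' : ℕ) (B : List ℕ) (m : ℕ) (h : m ≠ A.length) :
    (A ++ c :: B).getD m 0 = (A ++ c' :: B).getD m 0 := by
  rw [getD0, getD0, getElem?_off A c c' B m h]

lemma step_mid (A : List ℕ) (c : ℕ) (B : List ℕ) (h : 0 < c) :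
    Step (A ++ c :: B) (A ++ (c - 1) :: B) A.length := by
  refine ⟨by simp, ?_, c - 1, ?_, ?_⟩
  · intro m hm
    exact getElem?_off A (c - 1) c B m hm
  · rw [getElem?_mid]
    congr 1
    omega
  · exact getElem?_mid A (c - 1) B

lemma filter_decomp (p : ℕ → Bool) : ∀ (e A : List ℕ) (c : ℕ) (B : List ℕ),
    e.filter p = A ++ c :: B →
    ∃ E1 E2, e = E1 ++ c :: E2 ∧ E1.filter p = A ∧ E2.filter p = B := by
  intro e
  induction e with
  | nil => intro A c B h; simp at h
  | cons hd tl ih =>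
    intro A c B h
    rw [List.filter_cons] at h
    by_cases hp : p hd
    · rw [if_pos hp] at h
      cases A with
      | nil =>
        rw [List.nil_append] at h
        obtain ⟨h1, h2⟩ := List.cons.inj h
        exact ⟨[], tl, by rw [h1]; rfl, by simp, h2⟩
      | cons a A' =>
        rw [List.cons_append] at h
        obtain ⟨h1, h2⟩ := List.cons.inj h
        obtain ⟨E1, E2, g1, g2, g3⟩ := ih A' c B h2
        exact ⟨hd :: E1, E2, by rw [List.cons_append, g1],
          by rw [List.filter_cons, if_pos hp, g2, h1], g3⟩
    · rw [if_neg hp] at h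
      obtain ⟨E1, E2, g1, g2, g3⟩ := ih A c B h
      exact ⟨hd :: E1, E2, by rw [List.cons_append, g1],
        by rw [List.filter_cons, if_neg hp, g2], g3⟩

lemma split_ones (E : List ℕ) : ∃ F G, E = F ++ G ∧ (∀ g ∈ G, g = 1) ∧
    (F = [] ∨ ∃ F' f, F = F' ++ [f] ∧ f ≠ 1) := by
  induction E using List.reverseRecOn with
  | nil => exact ⟨[], [], rfl, by simp, Or.inl rfl⟩
  | append_singleton E' a ih =>
    by_cases ha : a = 1
    · obtain ⟨F, G, h1, h2, h3⟩ := ih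
      refine ⟨F, G ++ [a], by rw [h1, List.append_assoc], ?_, h3⟩
      intro g hg
      rcases List.mem_append.mp hg with h | h
      · exact h2 g h
      · rw [List.mem_singleton.mp h]; exact ha
    · exact ⟨E' ++ [a], [], by simp, by simp, Or.inr ⟨E', a, rfl, ha⟩⟩

lemma ones_shift {G : List ℕ} (h : ∀ g ∈ G, g = 1) (E : List ℕ) :
    G ++ 1 :: E = 1 :: (G ++ E) := by
  induction G with
  | nil => rfl
  | cons g G' ih =>
    have hg : g = 1 := h g List.mem_cons_self
    have hG' : ∀ x ∈ G', x = 1 := fun x hx => h x (List.mem_cons_of_mem _ hx)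
    rw [List.cons_append, ih hG', hg, List.cons_append]

lemma filter_ones {G : List ℕ} (h : ∀ g ∈ G, g = 1) :
    G.filter (fun a => decide (a ≠ 0)) = G := by
  induction G with
  | nil => rfl
  | cons g G' ih =>
    have hg : g = 1 := h g List.mem_cons_self
    have hG' : ∀ x ∈ G', x = 1 := fun x hx => h x (List.mem_cons_of_mem _ hx)
    rw [List.filter_cons, if_pos (by rw [hg]; simp), ih hG']

lemma normal_emb_exists {e : List ℕ} {x y : List ℕ+}
    (he : e.filter (fun a => decide (a ≠ 0)) = coes x) (hd : DecAt x y) :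
    ∃ η l, NormalEmb y e η ∧ Step e η l := by
  obtain ⟨p, q, K, hx, hy⟩ := hd
  subst hx
  rw [coes_append, coes_cons] at he
  obtain ⟨E1, E2, he1, he2, he3⟩ :=
    filter_decomp (fun a => decide (a ≠ 0)) e (coes p) (K : ℕ) (coes q) he
  have hK1 : (1:ℕ) ≤ (K : ℕ) := K.2
  rcases hy with ⟨hk1, hy⟩ | ⟨k', hk', hy⟩
  · -- K = 1 case: delete at the start of the run of 1's
    subst hy
    obtain ⟨F, G, hFG, hG, hF⟩ := split_ones E1
    have he' : e = F ++ 1 :: (G ++ E2) := by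
      rw [he1, hFG, hk1, List.append_assoc, ones_shift hG]
    refine ⟨F ++ 0 :: (G ++ E2), F.length, ⟨⟨?_, ?_, ?_⟩, ?_, ?_⟩, ?_⟩
    · rw [he']; simp
    · rw [List.filter_append, List.filter_cons]
      have h0 : (decide ((0:ℕ) ≠ 0)) = false := by simp
      rw [if_neg (by simp)]
      rw [coes_append, List.filter_append, filter_ones hG]
      have hE1 : E1.filter (fun a => decide (a ≠ 0)) = F.filter (fun a => decide (a ≠ 0)) ++ G := by
        rw [hFG, List.filter_append, filter_ones hG]
      rw [hE1] at he2
      rw [he3, ← he2]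
      rw [List.append_assoc]
    · intro i
      by_cases hi : i = F.length
      · subst hi
        rw [he', getD_mid, getD_mid]
        omega
      · rw [he', getD_off F 0 1 (G ++ E2) i hi]
    · intro i _
      by_cases hi : i = F.length
      · subst hi
        rw [getD_mid]
        exact Or.inr (Or.inr rfl)
      · rw [he', getD_off F 0 1 (G ++ E2) i hi]
        exact Or.inl rfl
    · rw [he']
      refine run_norm_of_del (F ++ 1 :: (G ++ E2)) (F ++ 0 :: (G ++ E2)) F.length ?_ ?_ ?_
      · intro m hm
        exact getD_off F 0 1 (G ++ E2) m hm
      · exact getD_mid F 1 (G ++ E2)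
      · rcases hF with h | ⟨F', f, hF', hf⟩
        · exact Or.inl (by rw [h]; rfl)
        · refine Or.inr ?_
          have : F ++ 1 :: (G ++ E2) = F' ++ f :: (1 :: (G ++ E2)) := by
            rw [hF', List.append_assoc]; rfl
          rw [this]
          have hlen : F.length - 1 = F'.length := by rw [hF']; simp
          rw [hlen, getD_mid]
          exact hf
    · rw [he']
      have := step_mid F 1 (G ++ E2) (by omega)
      simpa using this
  · -- K ≥ 2 case
    subst hy
    have hK2 : 2 ≤ (K : ℕ) := by
      have : (1:ℕ) ≤ (k' : ℕ) := k'.2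
      omega
    refine ⟨E1 ++ ((K : ℕ) - 1) :: E2, E1.length, ⟨⟨?_, ?_, ?_⟩, ?_, ?_⟩, ?_⟩
    · rw [he1]; simp
    · rw [List.filter_append, List.filter_cons, if_pos (by simp; omega)]
      rw [coes_append, coes_cons, he2, he3]
      congr 2
      omega
    · intro i
      by_cases hi : i = E1.length
      · subst hi
        rw [he1, getD_mid, getD_mid]
        omega
      · rw [he1, getD_off E1 ((K:ℕ) - 1) (K:ℕ) E2 i hi]
    · intro i _
      by_cases hi : i = E1.length
      · subst hi
        rw [getD_mid, he1, getD_mid]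
        exact Or.inr (Or.inl rfl)
      · rw [he1, getD_off E1 ((K:ℕ) - 1) (K:ℕ) E2 i hi]
        exact Or.inl rfl
    · rw [he1]
      refine run_norm_of_ne (E1 ++ (K:ℕ) :: E2) (E1 ++ ((K:ℕ) - 1) :: E2) E1.length ?_ ?_
      · intro m hm
        exact getD_off E1 ((K:ℕ) - 1) (K:ℕ) E2 m hm
      · rw [getD_mid]; omega
    · rw [he1]
      exact step_mid E1 (K:ℕ) E2 (by omega)


lemma chain_labels_exists : ∀ (c : List (List ℕ+)) (x : List ℕ+) (e : List ℕ),
    List.Chain' CompCovBy (x :: c) →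
    e.filter (fun a => decide (a ≠ 0)) = coes x →
    ∃ (es : List (List ℕ)) (ls : List ℕ),
      es.length = c.length + 1 ∧ ls.length = c.length ∧ es[0]? = some e ∧
      ∀ (m : ℕ) (e₁ e₂ : List ℕ) (v' : List ℕ+) (l : ℕ),
        es[m]? = some e₁ → es[m + 1]? = some e₂ → (x :: c)[m + 1]? = some v' →
        ls[m]? = some l → NormalEmb v' e₁ e₂ ∧ Step e₁ e₂ l := by
  intro c
  induction c with
  | nil =>
    intro x e _ _
    refine ⟨[e], [], rfl, rfl, rfl, ?_⟩
    intro m e₁ e₂ v' l _ h2 _ _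
    simp at h2
  | cons y c' ih =>
    intro x e hch he
    have hcov : CompCovBy x y := (List.isChain_cons_cons.mp hch).1
    have hch' : List.Chain' CompCovBy (y :: c') := (List.isChain_cons_cons.mp hch).2
    obtain ⟨η, l, hne, hst⟩ := normal_emb_exists he (cov_decAt hcov)
    have hη : η.filter (fun a => decide (a ≠ 0)) = coes y := hne.1.2.1
    obtain ⟨es', ls', g1, g2, g3, g4⟩ := ih y η hch' hη
    refine ⟨e :: es', l :: ls', by simp [g1], by simp [g2], by simp, ?_⟩
    intro m e₁ e₂ v' ll h1 h2 h3 h4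
    cases m with
    | zero =>
      simp only [List.getElem?_cons_zero] at h1 h4
      simp only [List.getElem?_cons_succ] at h2 h3
      rw [g3] at h2
      obtain rfl := Option.some.inj h1
      obtain rfl := Option.some.inj h4
      obtain rfl := Option.some.inj h2
      simp only [List.getElem?_cons_zero] at h3
      obtain rfl := Option.some.inj h3
      exact ⟨hne, hst⟩
    | succ m' =>
      rw [List.getElem?_cons_succ] at h1 h2 h3 h4
      exact g4 m' e₁ e₂ v' ll h1 h2 h3 h4

lemma lex_mid : ∀ (p : List ℕ) (a b : ℕ) (s t : List ℕ), a < b →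
    List.Lex (· < ·) (p ++ a :: s) (p ++ b :: t) := by
  intro p
  induction p with
  | nil => intro a b s t h; exact List.Lex.rel h
  | cons x p' ih => intro a b s t h; exact List.Lex.cons (ih a b s t h)


lemma coes_decomp : ∀ {v : List ℕ+} {A : List ℕ} {c : ℕ} {B : List ℕ},
    coes v = A ++ c :: B →
    ∃ (P : List ℕ+) (K : ℕ+) (Q : List ℕ+),
      v = P ++ K :: Q ∧ coes P = A ∧ (K : ℕ) = c ∧ coes Q = B
  | [], A, c, B, h => by simp [coes] at h
  | k :: v, A, c, B, h => by
    rw [coes_cons] at h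
    cases A with
    | nil =>
      rw [List.nil_append] at h
      obtain ⟨h1, h2⟩ := List.cons.inj h
      exact ⟨[], k, v, rfl, rfl, h1, h2⟩
    | cons a A' =>
      rw [List.cons_append] at h
      obtain ⟨h1, h2⟩ := List.cons.inj h
      obtain ⟨P, K, Q, g1, g2, g3, g4⟩ := coes_decomp h2
      exact ⟨k :: P, K, Q, by rw [g1]; rfl, by rw [coes_cons, g2, h1], g3, g4⟩

lemma dec_filter (E1 E2 : List ℕ) (c : ℕ) (hc : 0 < c) (v : List ℕ+)
    (hf : (E1 ++ c :: E2).filter (fun a => decide (a ≠ 0)) = coes v) :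
    ∃ v', (E1 ++ (c - 1) :: E2).filter (fun a => decide (a ≠ 0)) = coes v' ∧
      DecAt v v' := by
  rw [List.filter_append, List.filter_cons, if_pos (by simp; omega)] at hf
  obtain ⟨P, K, Q, h1, h2, h3, h4⟩ := coes_decomp hf.symm
  by_cases hc1 : c = 1
  · refine ⟨P ++ Q, ?_, P, Q, K, h1, Or.inl ⟨by omega, rfl⟩⟩
    rw [List.filter_append, List.filter_cons, if_neg (by simp [hc1]), coes_append, h2, h4]
  · have hc2 : 2 ≤ c := by omega
    have hpos : 0 < c - 1 := by omega
    obtain ⟨K2, hK2⟩ : ∃ K2 : ℕ+, (K2 : ℕ) = c - 1 := ⟨⟨c - 1, hpos⟩, rfl⟩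
    refine ⟨P ++ K2 :: Q, ?_, P, Q, K, h1, Or.inr ⟨K2, by omega, rfl⟩⟩
    rw [List.filter_append, List.filter_cons, if_pos (by simp; omega),
      coes_append, coes_cons, h2, h4, hK2]

end SV

/-- Descent Lemma.  Let `C : w = v₀ ⋗ v₁ ⋗ … ⋗ v_d = u` be a maximal chain of
`[u,w]` in ℙ* with label sequence `(l₁, …, l_d)`.  If `v_j` (`0 < j < d`) is a
descent of `C`, i.e. `l_j > l_{j+1}`, then `{v_j}` is a minimal skipped
interval of `C`.  (Here, 0-indexed, `l_j = ls[j-1]` and `l_{j+1} = ls[j]`.) -/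


theorem descent_lemma (u w : List ℕ+)
    (vs : List (List ℕ+)) (es : List (List ℕ)) (ls : List ℕ)
    (hc : MaxChain u w vs) (hl : ChainLabels w vs es ls)
    (j : ℕ) (hj0 : 0 < j) (hjd : j < ls.length)
    (a b : ℕ) (ha : ls[j - 1]? = some a) (hb : ls[j]? = some b) (hdesc : b < a)
    (v : List ℕ+) (hv : vs[j]? = some v) :
    IsMSI u w vs ls {v} := by
  obtain ⟨hhead, hlast, hchain⟩ := hc
  obtain ⟨hlen_es, hlen_ls, hes0, hprop⟩ := hl
  set n := vs.length with hn
  have hd : ls.length + 1 = n := hlen_ls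
  have hjn : j + 1 < n := by omega
  -- extract embeddings
  obtain ⟨e0, he0⟩ : ∃ z, es[j - 1]? = some z :=
    ⟨_, List.getElem?_eq_getElem (by omega)⟩
  obtain ⟨e1, he1⟩ : ∃ z, es[j]? = some z :=
    ⟨_, List.getElem?_eq_getElem (by omega)⟩
  obtain ⟨e2, he2⟩ : ∃ z, es[j + 1]? = some z :=
    ⟨_, List.getElem?_eq_getElem (by omega)⟩
  obtain ⟨v0, hv0⟩ : ∃ z, vs[j - 1]? = some z :=
    ⟨_, List.getElem?_eq_getElem (by omega)⟩
  obtain ⟨v2, hv2⟩ : ∃ z, vs[j + 1]? = some z :=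
    ⟨_, List.getElem?_eq_getElem (by omega)⟩
  have hj1 : j - 1 + 1 = j := by omega
  obtain ⟨hNE1, hS1⟩ := hprop (j - 1) e0 e1 v a he0 (by rw [hj1]; exact he1)
    (by rw [hj1]; exact hv) ha
  obtain ⟨hNE2, hS2⟩ := hprop j e1 e2 v2 b he1 he2 hv2 hb
  obtain ⟨hlen1, hoff1, a0, ha0, ha0'⟩ := hS1
  obtain ⟨hlen2, hoff2, b0, hb0, hb0'⟩ := hS2
  have hba : b ≠ a := by omega
  have hblt1 : b < e1.length := (List.getElem?_eq_some_iff.mp hb0).1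
  have halt0 : a < e0.length := (List.getElem?_eq_some_iff.mp ha0).1
  have he0b : e0[b]? = some (b0 + 1) := by rw [← hoff1 b hba]; exact hb0
  have hblt0 : b < e0.length := (List.getElem?_eq_some_iff.mp he0b).1
  -- expansion facts
  have hexp : ∀ (m : ℕ) (ee : List ℕ) (vv : List ℕ+), es[m]? = some ee →
      vs[m]? = some vv → ee.filter (fun x => decide (x ≠ 0)) = coes vv := by
    intro m ee vv hme hmv
    cases m with
    | zero =>
      rw [hes0] at hme
      obtain rfl := Option.some.inj hme
      cases vs with
      | nil => simp at hmv
      | cons v00 rest =>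
        rw [List.head?_cons] at hhead
        obtain rfl := Option.some.inj hhead
        simp only [List.getElem?_cons_zero] at hmv
        obtain rfl := Option.some.inj hmv
        exact SV.filter_coes v00
    | succ m' =>
      have hm'n : m' + 1 < n := (List.getElem?_eq_some_iff.mp hmv).1
      obtain ⟨ee', hee'⟩ : ∃ z, es[m']? = some z :=
        ⟨_, List.getElem?_eq_getElem (by omega)⟩
      obtain ⟨ll', hll'⟩ : ∃ z, ls[m']? = some z :=
        ⟨_, List.getElem?_eq_getElem (by omega)⟩
      exact (hprop m' ee' ee vv ll' hee' hme hmv hll').1.1.2.1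
  have hfe0 : e0.filter (fun x => decide (x ≠ 0)) = coes v0 :=
    hexp (j - 1) e0 v0 he0 hv0
  have hfe2 : e2.filter (fun x => decide (x ≠ 0)) = coes v2 :=
    hexp (j + 1) e2 v2 he2 hv2
  -- decompose e0 at position b
  set E1 := e0.take b with hE1
  set E2 := e0.drop (b + 1) with hE2
  have hE1len : E1.length = b := by rw [hE1, List.length_take]; omega
  have he0get : e0[b] = b0 + 1 := by
    obtain ⟨hh, hh2⟩ := List.getElem?_eq_some_iff.mp he0b
    exact hh2
  have he0dec : e0 = E1 ++ (b0 + 1) :: E2 := by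
    conv_lhs => rw [← List.take_append_drop b e0]
    rw [List.drop_eq_getElem_cons hblt0, he0get]
  -- e1' := decrement of e0 at position b
  obtain ⟨v1', hfe1', hDec01⟩ := SV.dec_filter E1 E2 (b0 + 1) (by omega) v0
    (by rw [← he0dec]; exact hfe0)
  simp only [Nat.add_sub_cancel] at hfe1'
  set e1' := E1 ++ b0 :: E2 with he1'def
  have hstep01' : Step e0 e1' b := by
    have hst := SV.step_mid E1 (b0 + 1) E2 (by omega)
    rw [Nat.add_sub_cancel, hE1len, ← he0dec] at hst
    exact hst
  have he1'off : ∀ m, m ≠ b → e1'.getD m 0 = e0.getD m 0 := by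
    intro m hm
    rw [he0dec]
    exact SV.getD_off E1 b0 (b0 + 1) E2 m (by rw [hE1len]; exact hm)
  have he1'offq : ∀ m, m ≠ b → e1'[m]? = e0[m]? := by
    intro m hm
    rw [he0dec]
    exact SV.getElem?_off E1 b0 (b0 + 1) E2 m (by rw [hE1len]; exact hm)
  have he1'b : e1'.getD b 0 = b0 := by
    rw [← hE1len]
    exact SV.getD_mid E1 b0 E2
  have he1'bq : e1'[b]? = some b0 := by
    rw [← hE1len]
    exact SV.getElem?_mid E1 b0 E2
  have he0bD : e0.getD b 0 = b0 + 1 := by rw [SV.getD0, he0b]; rfl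
  have he1'len : e1'.length = e0.length := by rw [he1'def, he0dec]; simp
  have he1b : e1.getD b 0 = b0 + 1 := by rw [SV.getD0, hb0]; rfl
  have hNE01' : NormalEmb v1' e0 e1' := by
    refine ⟨⟨he1'len, hfe1', ?_⟩, ?_, ?_⟩
    · intro i
      by_cases hi : i = b
      · subst hi
        rw [he1'b, he0bD]
        omega
      · rw [he1'off i hi]
    · intro i _
      by_cases hi : i = b
      · subst hi
        rw [he1'b, he0bD]
        exact Or.inr (Or.inl rfl)
      · exact Or.inl (he1'off i hi)
    · by_cases hb0z : b0 = 0
      · refine SV.run_norm_of_del e0 e1' b he1'off (by rw [he0bD, hb0z]) ?_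
        by_contra hcon
        push_neg at hcon
        obtain ⟨hb0ne, hprev⟩ := hcon
        have hprev1 : e1.getD (b - 1) 0 = 1 := by
          rw [SV.getD0, hoff1 (b - 1) (by omega), ← SV.getD0]
          exact hprev
        obtain ⟨r, t, hrun, hr1, hr2⟩ := SV.run_exists e1 (b - 1) (by omega)
        rw [hprev1] at hrun
        have he1b1 : e1.getD b 0 = 1 := by rw [he1b, hb0z]
        have htb : b ≤ t := by
          by_contra hbt
          push_neg at hbt
          have hteq : t = b - 1 := by omega
          rcases hrun.2.2.2.2 with hh | hh
          · omega
          · exact hh (by rw [hteq, show b - 1 + 1 = b by omega]; exact he1b1)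
        have hne0 := (hNE2.2.2 1 r t hrun).1 rfl b (by omega) htb
        exact hne0 (by rw [SV.getD0, hb0', hb0z]; rfl)
      · exact SV.run_norm_of_ne e0 e1' b he1'off (by rw [he1'b]; exact hb0z)
  -- DecAt v1' v2
  have he1'a : e1'[a]? = some (a0 + 1) := by rw [he1'offq a (by omega)]; exact ha0
  have halt1' : a < e1'.length := (List.getElem?_eq_some_iff.mp he1'a).1
  set D1 := e1'.take a with hD1
  set D2 := e1'.drop (a + 1) with hD2
  have hD1len : D1.length = a := by rw [hD1, List.length_take]; omega
  have he1'get : e1'[a] = a0 + 1 := (List.getElem?_eq_some_iff.mp he1'a).2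
  have he1'dec : e1' = D1 ++ (a0 + 1) :: D2 := by
    conv_lhs => rw [← List.take_append_drop a e1']
    rw [List.drop_eq_getElem_cons halt1', he1'get]
  obtain ⟨v2'', hfe2'', hDec12'⟩ := SV.dec_filter D1 D2 (a0 + 1) (by omega) v1'
    (by rw [← he1'dec]; exact hfe1')
  simp only [Nat.add_sub_cancel] at hfe2''
  have he2eq : e2 = D1 ++ a0 :: D2 := by
    apply List.ext_getElem?
    intro m
    by_cases hma : m = a
    · rw [hma, hoff2 a (by omega), ha0', ← hD1len, SV.getElem?_mid]
    · have hrhs : (D1 ++ a0 :: D2)[m]? = e1'[m]? := by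
        rw [SV.getElem?_off D1 a0 (a0 + 1) D2 m (by rw [hD1len]; exact hma), ← he1'dec]
      rw [hrhs]
      by_cases hmb : m = b
      · subst hmb
        rw [hb0', he1'bq]
      · rw [hoff2 m hmb, hoff1 m hma, he1'offq m hmb]
  have hv2eq : v2 = v2'' := SV.coes_inj (by rw [← hfe2, he2eq, hfe2''])
  have hDec12 : SV.DecAt v1' v2 := by rw [hv2eq]; exact hDec12'
  have hcov01 : CompCovBy v0 v1' := SV.decAt_cov hDec01
  have hcov12 : CompCovBy v1' v2 := SV.decAt_cov hDec12
  -- tail chain and its labels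
  obtain ⟨hv2lt, hv2get⟩ := List.getElem?_eq_some_iff.mp hv2
  have hvdrop : vs.drop (j + 1) = v2 :: vs.drop (j + 2) := by
    rw [List.drop_eq_getElem_cons hv2lt, hv2get]
  have hchaintail : List.Chain' CompCovBy (v1' :: vs.drop (j + 1)) := by
    rw [hvdrop]
    exact List.isChain_cons_cons.mpr ⟨hcov12, by rw [← hvdrop]; exact hchain.drop (j + 1)⟩
  obtain ⟨Bes, Bls, hB1, hB2, hB3, hB4⟩ :=
    SV.chain_labels_exists (vs.drop (j + 1)) v1' e1' hchaintail hfe1'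
  set vs' := vs.take j ++ v1' :: vs.drop (j + 1) with hvs'
  set es' := es.take j ++ Bes with hes'
  set ls' := ls.take (j - 1) ++ b :: Bls with hls'
  obtain ⟨hvlt, hvget⟩ := List.getElem?_eq_some_iff.mp hv
  have hvdecomp : vs = vs.take j ++ v :: vs.drop (j + 1) := by
    conv_lhs => rw [← List.take_append_drop j vs]
    rw [List.drop_eq_getElem_cons hvlt, hvget]
  obtain ⟨halt_ls, haget⟩ := List.getElem?_eq_some_iff.mp ha
  have hlsdecomp : ls = ls.take (j - 1) ++ a :: ls.drop j := by
    conv_lhs => rw [← List.take_append_drop (j - 1) ls]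
    rw [List.drop_eq_getElem_cons halt_ls, haget, hj1]
  have htakej_len : (es.take j).length = j := by rw [List.length_take]; omega
  have htakevs_len : (vs.take j).length = j := by rw [List.length_take]; omega
  have htakels_len : (ls.take (j - 1)).length = j - 1 := by rw [List.length_take]; omega
  have hdropvs_len : (vs.drop (j + 1)).length = n - (j + 1) := by rw [List.length_drop]
  have hesq1 : ∀ m, m < j → es'[m]? = es[m]? := by
    intro m hm
    rw [hes', List.getElem?_append_left (by rw [htakej_len]; exact hm),
      List.getElem?_take, if_pos hm]
  have hesq2 : ∀ m, j ≤ m → es'[m]? = Bes[m - j]? := by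
    intro m hm
    rw [hes', List.getElem?_append_right (by rw [htakej_len]; exact hm), htakej_len]
  have hvsq1 : ∀ m, m < j → vs'[m]? = vs[m]? := by
    intro m hm
    rw [hvs', List.getElem?_append_left (by rw [htakevs_len]; exact hm),
      List.getElem?_take, if_pos hm]
  have hvsq2 : vs'[j]? = some v1' := by
    rw [hvs', List.getElem?_append_right (by rw [htakevs_len]), htakevs_len]
    simp
  have hvsq3 : ∀ m, j < m → vs'[m]? = vs[m]? := by
    intro m hm
    rw [hvs', List.getElem?_append_right (by rw [htakevs_len]; omega), htakevs_len]
    have hms : m - j = (m - j - 1) + 1 := by omega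
    rw [hms, List.getElem?_cons_succ, List.getElem?_drop]
    congr 1
    omega
  have hlsq1 : ∀ m, m < j - 1 → ls'[m]? = ls[m]? := by
    intro m hm
    rw [hls', List.getElem?_append_left (by rw [htakels_len]; exact hm),
      List.getElem?_take, if_pos hm]
  have hlsq2 : ls'[j - 1]? = some b := by
    rw [hls', List.getElem?_append_right (by rw [htakels_len]), htakels_len]
    simp
  have hlsq3 : ∀ m, j ≤ m → ls'[m]? = Bls[m - j]? := by
    intro m hm
    rw [hls', List.getElem?_append_right (by rw [htakels_len]; omega), htakels_len]
    have hms : m - (j - 1) = (m - j) + 1 := by omega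
    rw [hms, List.getElem?_cons_succ]
  have hdropne : vs.drop (j + 1) ≠ [] := by rw [hvdrop]; exact List.cons_ne_nil _ _
  constructor
  · -- Skipped
    refine ⟨⟨j - 1, j + 1, by omega, ?_⟩, ⟨v, rfl⟩, vs', es', ls', ⟨?_, ?_, ?_⟩,
      ⟨?_, ?_, ?_, ?_⟩, ?_, ?_⟩
    · -- IntervalSet equality
      ext x
      simp only [Set.mem_singleton_iff, IntervalSet, Set.mem_setOf_eq]
      constructor
      · intro hx
        exact ⟨j, by omega, by omega, by rw [hx]; exact hv⟩
      · rintro ⟨m, hm1, hm2, hm3⟩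
        have : m = j := by omega
        subst this
        rw [hv] at hm3
        exact (Option.some.inj hm3).symm
    · -- head
      cases vs with
      | nil => simp at hhead
      | cons w0 rest =>
        rw [List.head?_cons] at hhead
        obtain rfl := Option.some.inj hhead
        rw [hvs']
        have hj' : j = (j - 1) + 1 := by omega
        rw [hj', List.take_succ_cons]
        rfl
    · -- last
      have h1 : vs.getLast? = (vs.drop (j + 1)).getLast? := by
        conv_lhs => rw [← List.take_append_drop (j + 1) vs]
        rw [List.getLast?_append, List.getLast?_eq_getLast hdropne]
        rfl
      have h2 : vs'.getLast? = (vs.drop (j + 1)).getLast? := by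
        rw [hvs', List.append_cons, List.getLast?_append,
          List.getLast?_eq_getLast hdropne]
        rfl
      rw [h2, ← h1]
      exact hlast
    · -- Chain'
      rw [hvs']
      refine List.isChain_append.mpr ⟨hchain.take j, hchaintail, ?_⟩
      intro x hx y hy
      simp only [List.head?_cons, Option.mem_def, Option.some.injEq] at hy
      have hgl : (vs.take j).getLast? = vs[j - 1]? := by
        rw [List.getLast?_eq_getElem?, htakevs_len, List.getElem?_take, if_pos (by omega)]
      rw [hgl, hv0] at hx
      simp only [Option.mem_def, Option.some.injEq] at hx
      rw [← hx, ← hy]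
      exact hcov01
    · -- es'.length = vs'.length
      simp only [hes', hvs', List.length_append, List.length_cons, htakej_len,
        htakevs_len, hB1, hdropvs_len]
    · -- ls'.length + 1 = vs'.length
      simp only [hls', hvs', List.length_append, List.length_cons, htakels_len,
        htakevs_len, hB2, hdropvs_len]
      omega
    · -- es'[0]?
      rw [hesq1 0 hj0]
      exact hes0
    · -- the label property
      intro m ee ee' vv ll h1 h2 h3 h4
      rcases lt_trichotomy (m + 1) j with hmj | hmj | hmj
      · rw [hesq1 m (by omega)] at h1
        rw [hesq1 (m + 1) hmj] at h2
        rw [hvsq1 (m + 1) hmj] at h3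
        rw [hlsq1 m (by omega)] at h4
        exact hprop m ee ee' vv ll h1 h2 h3 h4
      · have hm : m = j - 1 := by omega
        subst hm
        rw [hesq1 (j - 1) (by omega), he0] at h1
        rw [hj1] at h2 h3
        rw [hesq2 j (le_refl j), Nat.sub_self, hB3] at h2
        rw [hvsq2] at h3
        rw [hlsq2] at h4
        obtain rfl := Option.some.inj h1
        obtain rfl := Option.some.inj h2
        obtain rfl := Option.some.inj h3
        obtain rfl := Option.some.inj h4
        exact ⟨hNE01', hstep01'⟩
      · have hjm : j ≤ m := by omega
        rw [hesq2 m hjm] at h1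
        rw [hesq2 (m + 1) (by omega)] at h2
        rw [hvsq3 (m + 1) (by omega)] at h3
        rw [hlsq3 m hjm] at h4
        have hms : m + 1 - j = (m - j) + 1 := by omega
        rw [hms] at h2
        have h3' : (v1' :: vs.drop (j + 1))[(m - j) + 1]? = some vv := by
          rw [List.getElem?_cons_succ, List.getElem?_drop]
          rw [show j + 1 + (m - j) = m + 1 by omega]
          exact h3
        exact hB4 (m - j) ee ee' vv ll h1 h2 h3' h4
    · -- Lex
      conv_rhs => rw [hlsdecomp]
      rw [hls']
      exact SV.lex_mid _ b a _ _ hdesc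
    · -- containment
      intro x hx hxn
      have hxv : x ≠ v := by simpa using hxn
      rw [hvdecomp] at hx
      rcases List.mem_append.mp hx with h | h
      · exact List.mem_append.mpr (Or.inl h)
      · rcases List.mem_cons.mp h with h' | h'
        · exact absurd h' hxv
        · exact List.mem_append.mpr (Or.inr (List.mem_cons_of_mem _ h'))
  · -- minimality
    intro I' hI' hss
    obtain ⟨x, hx⟩ := hI'.2.1
    have hxv : x = v := hss.1 hx
    subst hxv
    have : I' = {x} := Set.Subset.antisymm hss.1 (Set.singleton_subset_iff.mpr hx)
    exact hss.2 (by rw [this])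
end

section
/- (Chain Specification Lemma) Let C be a maximal chain of an interval [u,w] of the composition poset ℙ* with label sequence l(C), and let l' = (l'_1,…,l'_d) be any permutation of l(C). Define expansions η_{v'_0} = w and, for j ≥ 1, obtain η_{v'_j} from η_{v'_{j−1}} by subtracting 1 from its entry in position l'_j. Then C': w = v'_0 ⋗ v'_1 ⋗ … ⋗ v'_d = u is a maximal chain of [u,w] (the chain specified by l'), and l(C') ≤ l' in lexicographic order. -/
namespace CSL

def filt (e : List ℕ) : List ℕ := e.filter (fun a => decide (a ≠ 0))

def toComp (e : List ℕ) : List ℕ+ :=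
  e.filterMap (fun a => if h : a = 0 then none else some ⟨a, Nat.pos_of_ne_zero h⟩)

def decAt (e : List ℕ) (p : ℕ) : List ℕ := e.set p (e.getD p 0 - 1)

def iterDec : List ℕ → List ℕ → List (List ℕ)
  | e, [] => [e]
  | e, p :: L => e :: iterDec (decAt e p) L

def decList : List ℕ → List ℕ → List ℕ
  | e, [] => e
  | e, p :: L => decList (decAt e p) L

def cnz (e : List ℕ) : ℕ := e.countP (fun a => decide (a ≠ 0))

def posOf : List ℕ → ℕ → ℕ
  | [], _ => 0
  | a :: e, m =>
    if a = 0 then posOf e m + 1 else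
      match m with
      | 0 => 0
      | m + 1 => posOf e m + 1

def runStart (e : List ℕ) : ℕ → ℕ
  | 0 => 0
  | p + 1 => if e.getD p 0 = 1 then runStart e p else p + 1

def normPos (e : List ℕ) (p : ℕ) : ℕ := if e.getD p 0 = 1 then runStart e p else p

def normLabel (e' e'' : List ℕ) (p : ℕ) : ℕ := normPos e'' (posOf e'' (cnz (e'.take p)))

def specSeq : List ℕ → List ℕ → List ℕ → List (List ℕ) × List ℕ
  | _, e'', [] => ([e''], [])
  | e', e'', p :: L =>
    let q := normLabel e' e'' p
    let r := specSeq (decAt e' p) (decAt e'' q) L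
    (e'' :: r.1, q :: r.2)

def Valid (e : List ℕ) (L : List ℕ) : Prop := ∀ x, L.count x ≤ e.getD x 0

/-! basic lemmas -/

@[simp] theorem coes_nil : coes [] = [] := rfl
@[simp] theorem coes_cons (a : ℕ+) (u : List ℕ+) : coes (a :: u) = (a : ℕ) :: coes u := rfl

theorem coes_toComp (e : List ℕ) : coes (toComp e) = filt e := by
  induction e with
  | nil => rfl
  | cons a e ih =>
    by_cases h : a = 0
    · have : toComp (a :: e) = toComp e := by
        simp only [toComp, List.filterMap_cons, dif_pos h]
      rw [this, ih]; simp [filt, h]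
    · have : coes (toComp (a :: e)) = a :: coes (toComp e) := by
        simp only [toComp, List.filterMap_cons, dif_neg h]; rfl
      rw [this, ih]; simp [filt, h]

theorem coes_inj : ∀ {u v : List ℕ+}, coes u = coes v → u = v
  | [], [], _ => rfl
  | [], _ :: _, h => by simp at h
  | _ :: _, [], h => by simp at h
  | a :: u, b :: v, h => by
    simp only [coes_cons, List.cons.injEq] at h
    rw [PNat.coe_injective h.1, coes_inj h.2]

theorem toComp_eq {e : List ℕ} {v : List ℕ+} (h : filt e = coes v) : toComp e = v :=
  coes_inj (by rw [coes_toComp, h])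

theorem toComp_coes (w : List ℕ+) : toComp (coes w) = w := by
  induction w with
  | nil => rfl
  | cons a u ih =>
    have : (a : ℕ) ≠ 0 := a.ne_zero
    simp only [coes_cons, toComp, List.filterMap_cons, dif_neg this] at ih ⊢
    rw [show (⟨(a:ℕ), Nat.pos_of_ne_zero this⟩ : ℕ+) = a from rfl]
    exact congrArg _ ih

theorem decAt_length (e : List ℕ) (p : ℕ) : (decAt e p).length = e.length := by
  simp [decAt]

theorem decAt_getD (e : List ℕ) (p x : ℕ) :
    (decAt e p).getD x 0 = if x = p then e.getD p 0 - 1 else e.getD x 0 := by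
  simp only [decAt, List.getD_eq_getElem?_getD, List.getElem?_set]
  by_cases h : x = p
  · subst h
    by_cases hl : x < e.length
    · simp [hl]
    · simp [hl, List.getElem?_eq_none (le_of_not_gt hl)]
  · rw [if_neg (fun hh => h hh.symm), if_neg h]

theorem getD_pos_lt {e : List ℕ} {p : ℕ} (h : e.getD p 0 ≠ 0) : p < e.length := by
  by_contra hl
  rw [List.getD_eq_getElem?_getD, List.getElem?_eq_none (le_of_not_gt hl)] at h
  exact h rfl

theorem step_decAt {e : List ℕ} {p : ℕ} (h : e.getD p 0 ≠ 0) : Step e (decAt e p) p := by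
  have hp : p < e.length := getD_pos_lt h
  refine ⟨decAt_length e p, ?_, e.getD p 0 - 1, ?_, ?_⟩
  · intro j hj
    simp only [decAt, List.getElem?_set]
    rw [if_neg (fun hh => hj hh.symm)]
  · rw [List.getElem?_eq_getElem hp]
    have := List.getD_eq_getElem e 0 hp
    rw [← this]
    congr 1
    omega
  · simp [decAt, List.getElem?_set, hp]

theorem step_unique {e e' : List ℕ} {i : ℕ} (h : Step e e' i) : e' = decAt e i := by
  obtain ⟨hlen, hne, a, hi, hi'⟩ := h
  apply List.ext_getElem?
  intro n
  by_cases hn : n = i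
  · subst hn
    have hlt : n < e.length := (List.getElem?_eq_some_iff.1 hi).1
    have : e.getD n 0 = a + 1 := by rw [List.getD_eq_getElem?_getD, hi]; rfl
    have h2 : e[n] = a + 1 := by rw [← List.getD_eq_getElem e 0 hlt]; exact this
    simp [decAt, List.getElem?_set, hlt, hi', h2]
  · rw [hne n hn]
    simp only [decAt, List.getElem?_set]
    rw [if_neg (fun hh => hn hh.symm)]

theorem lists_eq_of_getD {l1 l2 : List ℕ} (hlen : l1.length = l2.length)
    (h : ∀ x, l1.getD x 0 = l2.getD x 0) : l1 = l2 := by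
  apply List.ext_getElem hlen
  intro n h1 h2
  have := h n
  rwa [List.getD_eq_getElem _ _ h1, List.getD_eq_getElem _ _ h2] at this

end CSL

namespace CSL

theorem filt_nil : filt [] = [] := rfl

theorem filt_cons (a : ℕ) (e : List ℕ) :
    filt (a :: e) = if a = 0 then filt e else a :: filt e := by
  by_cases h : a = 0 <;> simp [filt, h]

theorem cnz_nil : cnz [] = 0 := rfl

theorem cnz_cons (a : ℕ) (e : List ℕ) :
    cnz (a :: e) = cnz e + (if a = 0 then 0 else 1) := by
  by_cases h : a = 0 <;> simp [cnz, List.countP_cons, h]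

theorem cnz_eq_length_filt (e : List ℕ) : cnz e = (filt e).length :=
  List.countP_eq_length_filter

theorem posOf_cons_zero {a : ℕ} (e : List ℕ) (m : ℕ) (ha : a = 0) :
    posOf (a :: e) m = posOf e m + 1 := by simp [posOf, ha]

theorem posOf_cons_nz_zero {a : ℕ} (e : List ℕ) (ha : ¬a = 0) :
    posOf (a :: e) 0 = 0 := by simp [posOf, ha]

theorem posOf_cons_nz_succ {a : ℕ} (e : List ℕ) (m : ℕ) (ha : ¬a = 0) :
    posOf (a :: e) (m + 1) = posOf e m + 1 := by simp [posOf, ha]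

theorem lemA : ∀ (e : List ℕ) (p : ℕ), e.getD p 0 ≠ 0 →
    p < e.length ∧ cnz (e.take p) < cnz e ∧
    (filt e).getD (cnz (e.take p)) 0 = e.getD p 0 ∧
    posOf e (cnz (e.take p)) = p
  | [], p, h => absurd (by cases p <;> rfl) h
  | a :: e, 0, h => by
    rw [List.getD_cons_zero] at h
    refine ⟨Nat.succ_pos _, ?_, ?_, ?_⟩
    · simp [cnz_cons, cnz_nil, h]
    · simp [filt_cons, h, cnz_nil]
    · simp [posOf, h, cnz_nil]
  | a :: e, p + 1, h => by
    rw [List.getD_cons_succ] at h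
    obtain ⟨ih1, ih2, ih3, ih4⟩ := lemA e p h
    by_cases ha : a = 0
    · refine ⟨by simpa using ih1, ?_, ?_, ?_⟩
      · simpa [List.take_succ_cons, cnz_cons, ha] using ih2
      · simpa [List.take_succ_cons, cnz_cons, filt_cons, ha] using ih3
      · subst ha
        simp [List.take_succ_cons, cnz_cons, posOf_cons_zero _ _ rfl, ih4]
    · refine ⟨by simpa using ih1, ?_, ?_, ?_⟩
      · simp only [List.take_succ_cons, cnz_cons, if_neg ha]; omega
      · simpa [List.take_succ_cons, cnz_cons, filt_cons, ha] using ih3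
      · simp [List.take_succ_cons, cnz_cons, if_neg ha, posOf_cons_nz_succ _ _ ha, ih4]
  termination_by e => e.length

theorem lemB : ∀ (e : List ℕ) (m : ℕ), m < cnz e →
    posOf e m < e.length ∧ e.getD (posOf e m) 0 ≠ 0 ∧
    cnz (e.take (posOf e m)) = m ∧
    (filt e).getD m 0 = e.getD (posOf e m) 0
  | [], m, h => absurd h (by simp [cnz_nil])
  | a :: e, m, h => by
    by_cases ha : a = 0
    · rw [cnz_cons, if_pos ha] at h
      obtain ⟨ih1, ih2, ih3, ih4⟩ := lemB e m (by omega)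
      rw [posOf_cons_zero _ _ ha]
      refine ⟨by simpa using ih1, by simpa using ih2, ?_, ?_⟩
      · simp [List.take_succ_cons, cnz_cons, ha, ih3]
      · simpa [ha, filt_cons] using ih4
    · match m with
      | 0 =>
        rw [posOf_cons_nz_zero _ ha]
        exact ⟨Nat.succ_pos _, by simpa using ha, by simp [cnz_nil],
          by simp [filt_cons, ha]⟩
      | m + 1 =>
        rw [cnz_cons, if_neg ha] at h
        obtain ⟨ih1, ih2, ih3, ih4⟩ := lemB e m (by omega)
        rw [posOf_cons_nz_succ _ _ ha]
        refine ⟨by simpa using ih1, by simpa using ih2, ?_, ?_⟩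
        · simp [List.take_succ_cons, cnz_cons, ha, ih3]
        · simpa [ha, filt_cons] using ih4
  termination_by e => e.length

theorem decAt_cons_zero (a : ℕ) (e : List ℕ) : decAt (a :: e) 0 = (a - 1) :: e := rfl

theorem decAt_cons_succ (a : ℕ) (e : List ℕ) (p : ℕ) :
    decAt (a :: e) (p + 1) = a :: decAt e p := by
  simp [decAt, List.getD_cons_succ]

theorem filt_decAt : ∀ (e : List ℕ) (p : ℕ), e.getD p 0 ≠ 0 →
    filt (decAt e p) = if e.getD p 0 = 1 then (filt e).eraseIdx (cnz (e.take p))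
      else (filt e).set (cnz (e.take p)) (e.getD p 0 - 1)
  | [], p, h => absurd (by cases p <;> rfl) h
  | a :: e, 0, h => by
    rw [List.getD_cons_zero] at h
    rw [decAt_cons_zero, List.getD_cons_zero]
    by_cases ha : a = 1
    · simp [ha, filt_cons, cnz_nil]
    · have : a - 1 ≠ 0 := by omega
      simp [filt_cons, ha, h, this, cnz_nil]
  | a :: e, p + 1, h => by
    rw [List.getD_cons_succ] at h
    rw [decAt_cons_succ, List.getD_cons_succ]
    have ih := filt_decAt e p h
    by_cases ha : a = 0
    · simpa [filt_cons, ha, List.take_succ_cons, cnz_cons] using ih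
    · rw [filt_cons, if_neg ha, filt_cons, if_neg ha, List.take_succ_cons, cnz_cons, if_neg ha, ih]
      split_ifs <;> simp [List.eraseIdx_cons_succ]
  termination_by e => e.length

theorem sum_filt_decAt : ∀ (e : List ℕ) (p : ℕ), e.getD p 0 ≠ 0 →
    (filt (decAt e p)).sum + 1 = (filt e).sum
  | [], p, h => absurd (by cases p <;> rfl) h
  | a :: e, 0, h => by
    rw [List.getD_cons_zero] at h
    rw [decAt_cons_zero]
    by_cases ha : a = 1
    · simp [ha, filt_cons]; omega
    · have : a - 1 ≠ 0 := by omega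
      simp [filt_cons, ha, h, this]
      omega
  | a :: e, p + 1, h => by
    rw [List.getD_cons_succ] at h
    rw [decAt_cons_succ]
    have ih := sum_filt_decAt e p h
    by_cases ha : a = 0 <;> simp [filt_cons, ha] <;> omega
  termination_by e => e.length

theorem cnz_take_succ (e : List ℕ) (i : ℕ) (h : i < e.length) :
    cnz (e.take (i + 1)) = cnz (e.take i) + (if e.getD i 0 = 0 then 0 else 1) := by
  have h1 : e.take (i + 1) = e.take i ++ [e[i]] := by
    rw [List.take_succ, List.getElem?_eq_getElem h]; rfl
  rw [h1, List.getD_eq_getElem _ _ h]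
  unfold cnz
  rw [List.countP_append]
  by_cases hz : e[i] = 0 <;> simp [List.countP_cons, hz]

theorem runStart_le (e : List ℕ) : ∀ p, runStart e p ≤ p
  | 0 => le_refl 0
  | p + 1 => by
    rw [runStart]
    by_cases h : e.getD p 0 = 1
    · rw [if_pos h]; exact le_trans (runStart_le e p) (Nat.le_succ p)
    · rw [if_neg h]

theorem runStart_ones (e : List ℕ) : ∀ p i, runStart e p ≤ i → i < p → e.getD i 0 = 1
  | 0, i, h1, h2 => absurd h2 (Nat.not_lt_zero i)
  | p + 1, i, h1, h2 => by
    rw [runStart] at h1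
    by_cases h : e.getD p 0 = 1
    · rw [if_pos h] at h1
      rcases Nat.lt_or_ge i p with h3 | h3
      · exact runStart_ones e p i h1 h3
      · have : i = p := by omega
        rw [this]; exact h
    · rw [if_neg h] at h1; omega

theorem runStart_min (e : List ℕ) : ∀ p, runStart e p = 0 ∨ e.getD (runStart e p - 1) 0 ≠ 1
  | 0 => Or.inl rfl
  | p + 1 => by
    rw [runStart]
    by_cases h : e.getD p 0 = 1
    · rw [if_pos h]; exact runStart_min e p
    · rw [if_neg h]; right; simpa using h

theorem erase_adjacent : ∀ (F : List ℕ) (i j : ℕ), i ≤ j → j < F.length →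
    (∀ k, i ≤ k → k ≤ j → F.getD k 0 = F.getD i 0) → F.eraseIdx i = F.eraseIdx j
  | [], _, j, _, hj, _ => absurd hj (by simp)
  | a :: F, 0, 0, _, _, _ => rfl
  | a :: F, 0, j + 1, _, hj, hc => by
    simp only [List.length_cons] at hj
    have hj' : j < F.length := by omega
    -- F has head a
    have h0 : (a :: F).getD 0 0 = a := rfl
    have hhead : F.getD 0 0 = a := by
      have := hc 1 (Nat.zero_le 1) (by omega)
      simpa [List.getD_cons_succ] using this
    match F, hj' with
    | b :: F', hj' =>
      have hb : b = a := by simpa using hhead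
      subst hb
      have ih := erase_adjacent (b :: F') 0 j (Nat.zero_le j) (by simpa using hj') ?_
      · simp only [List.eraseIdx_cons_succ, List.eraseIdx_cons_zero] at ih ⊢
        rw [← ih]
      · intro k hk1 hk2
        have := hc (k + 1) (Nat.zero_le _) (by omega)
        rw [List.getD_cons_succ] at this
        rw [this]
        exact hhead
  | a :: F, i + 1, j, hij, hj, hc => by
    match j, hij with
    | j + 1, hij =>
      simp only [List.eraseIdx_cons_succ]
      have ih := erase_adjacent F i j (by omega) (by simpa using hj) ?_
      · rw [ih]
      · intro k hk1 hk2
        have := hc (k + 1) (by omega) (by omega)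
        simpa [List.getD_cons_succ] using this
  termination_by F => F.length

end CSL

namespace CSL

theorem normalEmb_decAt (e'' : List ℕ) (q : ℕ) (hq : e''.getD q 0 ≠ 0)
    (hmin : e''.getD q 0 = 1 → q = 0 ∨ e''.getD (q - 1) 0 ≠ 1) (v : List ℕ+)
    (hfilt : filt (decAt e'' q) = coes v) : NormalEmb v e'' (decAt e'' q) := by
  refine ⟨⟨decAt_length e'' q, hfilt, ?_⟩, ?_, ?_⟩
  · intro i
    rw [decAt_getD]
    by_cases hiq : i = q
    · subst hiq; rw [if_pos rfl]; exact Nat.sub_le _ _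
    · rw [if_neg hiq]
  · intro i _
    rw [decAt_getD]
    by_cases hiq : i = q
    · subst hiq; rw [if_pos rfl]; exact Or.inr (Or.inl rfl)
    · rw [if_neg hiq]; exact Or.inl rfl
  · rintro k r t ⟨hrt, htlen, hconst, hminr, hmax⟩
    constructor
    · intro hk1 i hri hit
      rw [decAt_getD]
      by_cases hiq : i = q
      · exfalso
        subst hiq
        have hvq : e''.getD i 0 = 1 := by rw [hconst i (le_of_lt hri) hit]; exact hk1
        rcases hmin hvq with h0 | hne
        · omega
        · exact hne (by rw [hconst (i - 1) (by omega) (by omega)]; exact hk1)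
      · rw [if_neg hiq, hconst i (le_of_lt hri) hit, hk1]
        exact one_ne_zero
    · intro hk2
      rw [decAt_getD]
      by_cases hrq : r = q
      · rw [if_pos hrq, ← hrq, hconst r (le_refl r) hrt]
        omega
      · rw [if_neg hrq, hconst r (le_refl r) hrt]
        omega

theorem core (e' e'' : List ℕ) (hf : filt e' = filt e'') (p : ℕ) (hp : e'.getD p 0 ≠ 0) :
    e''.getD (normLabel e' e'' p) 0 ≠ 0 ∧
    filt (decAt e'' (normLabel e' e'' p)) = filt (decAt e' p) ∧
    (∀ v : List ℕ+, filt (decAt e' p) = coes v →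
      NormalEmb v e'' (decAt e'' (normLabel e' e'' p))) ∧
    (e' = e'' → normLabel e' e'' p ≤ p) := by
  obtain ⟨hpl, hmlt, hfv, hpos⟩ := lemA e' p hp
  have hcnz : cnz e' = cnz e'' := by rw [cnz_eq_length_filt, cnz_eq_length_filt, hf]
  have hmlt'' : cnz (e'.take p) < cnz e'' := hcnz ▸ hmlt
  obtain ⟨hq1, hq2, hq3, hq4⟩ := lemB e'' (cnz (e'.take p)) hmlt''
  have hv : e''.getD (posOf e'' (cnz (e'.take p))) 0 = e'.getD p 0 := by
    rw [← hq4, ← hf, hfv]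
  have hqdef : normLabel e' e'' p =
      if e''.getD (posOf e'' (cnz (e'.take p))) 0 = 1
        then runStart e'' (posOf e'' (cnz (e'.take p)))
        else posOf e'' (cnz (e'.take p)) := rfl
  by_cases h1 : e''.getD (posOf e'' (cnz (e'.take p))) 0 = 1
  · -- value 1 case
    rw [hqdef, if_pos h1]
    have h1' : e'.getD p 0 = 1 := by rw [← hv]; exact h1
    have hqle : runStart e'' (posOf e'' (cnz (e'.take p))) ≤ posOf e'' (cnz (e'.take p)) :=
      runStart_le _ _
    -- all entries in [q, p''] are 1
    have hones : ∀ i, runStart e'' (posOf e'' (cnz (e'.take p))) ≤ i →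
        i ≤ posOf e'' (cnz (e'.take p)) → e''.getD i 0 = 1 := by
      intro i h2 h3
      rcases Nat.lt_or_ge i (posOf e'' (cnz (e'.take p))) with h4 | h4
      · exact runStart_ones _ _ _ h2 h4
      · have : i = posOf e'' (cnz (e'.take p)) := by omega
        rw [this]; exact h1
    have hq0 : e''.getD (runStart e'' (posOf e'' (cnz (e'.take p)))) 0 = 1 :=
      hones _ (le_refl _) hqle
    -- cnz of takes increase by one along the run
    have hstep : ∀ d, d ≤ posOf e'' (cnz (e'.take p)) - runStart e'' (posOf e'' (cnz (e'.take p))) →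
        cnz (e''.take (runStart e'' (posOf e'' (cnz (e'.take p))) + d)) =
        cnz (e''.take (runStart e'' (posOf e'' (cnz (e'.take p))))) + d := by
      intro d
      induction d with
      | zero => intro _; rfl
      | succ d ih =>
        intro hd
        have hlt : runStart e'' (posOf e'' (cnz (e'.take p))) + d < e''.length := by omega
        rw [← Nat.add_assoc, cnz_take_succ _ _ hlt, ih (by omega),
          hones _ (by omega) (by omega), if_neg one_ne_zero]
        omega
    have hm : cnz (e''.take (runStart e'' (posOf e'' (cnz (e'.take p))))) +
        (posOf e'' (cnz (e'.take p)) - runStart e'' (posOf e'' (cnz (e'.take p)))) =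
        cnz (e'.take p) := by
      have := hstep (posOf e'' (cnz (e'.take p)) - runStart e'' (posOf e'' (cnz (e'.take p))))
        (le_refl _)
      rw [Nat.add_sub_cancel' hqle] at this
      rw [← this, hq3]
    -- filt equality
    have hfd'' : filt (decAt e'' (runStart e'' (posOf e'' (cnz (e'.take p))))) =
        (filt e'').eraseIdx (cnz (e''.take (runStart e'' (posOf e'' (cnz (e'.take p)))))) := by
      rw [filt_decAt _ _ (by rw [hq0]; exact one_ne_zero), if_pos hq0]
    have hfd' : filt (decAt e' p) = (filt e').eraseIdx (cnz (e'.take p)) := by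
      rw [filt_decAt _ _ hp, if_pos h1']
    have hera : (filt e'').eraseIdx (cnz (e''.take (runStart e'' (posOf e'' (cnz (e'.take p)))))) =
        (filt e'').eraseIdx (cnz (e'.take p)) := by
      apply erase_adjacent
      · omega
      · rw [← cnz_eq_length_filt]; exact hmlt''
      · intro k hk1 hk2
        have hval : ∀ k', cnz (e''.take (runStart e'' (posOf e'' (cnz (e'.take p))))) ≤ k' →
            k' ≤ cnz (e'.take p) → (filt e'').getD k' 0 = 1 := by
          intro k' h5 h6
          set i := runStart e'' (posOf e'' (cnz (e'.take p))) +
            (k' - cnz (e''.take (runStart e'' (posOf e'' (cnz (e'.take p)))))) with hidef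
          have hi1 : e''.getD i 0 = 1 := hones i (by omega) (by omega)
          obtain ⟨_, _, hfi, _⟩ := lemA e'' i (by rw [hi1]; exact one_ne_zero)
          have : cnz (e''.take i) = k' := by
            rw [hidef, hstep _ (by omega)]
            omega
          rw [← this, hfi, hi1]
        rw [hval k hk1 hk2, hval _ (le_refl _) (by omega)]
    have hfeq : filt (decAt e'' (runStart e'' (posOf e'' (cnz (e'.take p))))) =
        filt (decAt e' p) := by
      rw [hfd'', hera, hfd', hf]
    refine ⟨by rw [hq0]; exact one_ne_zero, hfeq, ?_, ?_⟩
    · intro v hfv'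
      exact normalEmb_decAt _ _ (by rw [hq0]; exact one_ne_zero)
        (fun _ => runStart_min _ _) v (by rw [hfeq, hfv'])
    · intro heq
      subst heq
      omega
  · -- value ≥ 2 case
    rw [hqdef, if_neg h1]
    have hfeq : filt (decAt e'' (posOf e'' (cnz (e'.take p)))) = filt (decAt e' p) := by
      rw [filt_decAt _ _ hq2, if_neg h1, filt_decAt _ _ hp,
        if_neg (by rw [← hv]; exact h1), hq3, hv, hf]
    refine ⟨hq2, hfeq, ?_, ?_⟩
    · intro v hfv'
      exact normalEmb_decAt _ _ hq2 (fun hc => absurd hc h1) v (by rw [hfeq, hfv'])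
    · intro heq
      subst heq
      omega

end CSL

namespace CSL

theorem iterDec_length : ∀ (L : List ℕ) (e : List ℕ), (iterDec e L).length = L.length + 1
  | [], _ => rfl
  | p :: L, e => by simp [iterDec, iterDec_length L (decAt e p)]

theorem iterDec_head : ∀ (L : List ℕ) (e : List ℕ), (iterDec e L)[0]? = some e
  | [], _ => rfl
  | _ :: _, _ => by rw [iterDec, List.getElem?_cons_zero]

theorem valid_head {e : List ℕ} {p : ℕ} {L : List ℕ} (h : Valid e (p :: L)) :
    e.getD p 0 ≠ 0 := by
  have := h p
  rw [List.count_cons_self] at this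
  omega

theorem valid_tail {e : List ℕ} {p : ℕ} {L : List ℕ} (h : Valid e (p :: L)) :
    Valid (decAt e p) L := by
  intro x
  rw [decAt_getD]
  by_cases hx : x = p
  · subst hx
    have := h x
    rw [if_pos rfl]
    rw [List.count_cons_self] at this
    omega
  · rw [if_neg hx]
    have := h x
    rw [List.count_cons_of_ne (Ne.symm hx)] at this
    exact this

theorem iterDec_steps : ∀ (L : List ℕ) (e : List ℕ), Valid e L →
    ∀ (j : ℕ) (e1 e2 : List ℕ) (x : ℕ), (iterDec e L)[j]? = some e1 →
    (iterDec e L)[j + 1]? = some e2 → L[j]? = some x → Step e1 e2 x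
  | [], e, _, j, e1, e2, x, _, _, hx => by simp at hx
  | p :: L, e, hv, 0, e1, e2, x, h1, h2, hx => by
    rw [iterDec] at h1 h2
    rw [List.getElem?_cons_zero] at h1 hx
    rw [List.getElem?_cons_succ, iterDec_head] at h2
    cases h1; cases h2; cases hx
    exact step_decAt (valid_head hv)
  | p :: L, e, hv, j + 1, e1, e2, x, h1, h2, hx => by
    rw [iterDec, List.getElem?_cons_succ] at h1 h2
    rw [List.getElem?_cons_succ] at hx
    exact iterDec_steps L (decAt e p) (valid_tail hv) j e1 e2 x h1 h2 hx

theorem iterDec_getLast : ∀ (L : List ℕ) (e : List ℕ),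
    (iterDec e L).getLast? = some (decList e L)
  | [], e => rfl
  | p :: L, e => by
    rw [iterDec, decList]
    rw [List.getLast?_cons]
    have h := iterDec_getLast L (decAt e p)
    have hne : iterDec (decAt e p) L ≠ [] := by
      intro hc
      have := iterDec_length L (decAt e p)
      rw [hc] at this
      simp at this
    rw [List.getLast?_eq_getLast hne] at h
    simp [hne, List.getLast?_eq_getLast hne, h.symm]

theorem decList_length : ∀ (L : List ℕ) (e : List ℕ), (decList e L).length = e.length
  | [], _ => rfl
  | p :: L, e => by rw [decList, decList_length L, decAt_length]

theorem decList_getD : ∀ (L : List ℕ) (e : List ℕ) (x : ℕ),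
    (decList e L).getD x 0 = e.getD x 0 - L.count x
  | [], e, x => by simp [decList]
  | p :: L, e, x => by
    rw [decList, decList_getD L, decAt_getD]
    by_cases hx : x = p
    · subst hx
      rw [if_pos rfl, List.count_cons_self]
      omega
    · rw [if_neg hx, List.count_cons_of_ne (Ne.symm hx)]

theorem decList_concat : ∀ (L : List ℕ) (e : List ℕ) (x : ℕ),
    decList e (L ++ [x]) = decAt (decList e L) x
  | [], e, x => rfl
  | p :: L, e, x => by rw [List.cons_append, decList, decList, decList_concat L]

theorem specSeq_fst_length : ∀ (L : List ℕ) (e' e'' : List ℕ),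
    ((specSeq e' e'' L).1).length = L.length + 1
  | [], _, _ => rfl
  | p :: L, e', e'' => by
    simp [specSeq, specSeq_fst_length L]

theorem specSeq_snd_length : ∀ (L : List ℕ) (e' e'' : List ℕ),
    ((specSeq e' e'' L).2).length = L.length
  | [], _, _ => rfl
  | p :: L, e', e'' => by
    simp [specSeq, specSeq_snd_length L]

theorem specSeq_fst_head : ∀ (L : List ℕ) (e' e'' : List ℕ),
    ((specSeq e' e'' L).1)[0]? = some e''
  | [], _, _ => rfl
  | _ :: _, _, _ => by rw [specSeq, List.getElem?_cons_zero]

theorem spec_main : ∀ (L : List ℕ) (e' e'' : List ℕ), Valid e' L → filt e' = filt e'' →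
    ∀ (j : ℕ) (e1 e2 : List ℕ) (v : List ℕ+) (l : ℕ),
    ((specSeq e' e'' L).1)[j]? = some e1 → ((specSeq e' e'' L).1)[j + 1]? = some e2 →
    ((iterDec e' L).map toComp)[j + 1]? = some v → ((specSeq e' e'' L).2)[j]? = some l →
    NormalEmb v e1 e2 ∧ Step e1 e2 l
  | [], e', e'', _, _, j, e1, e2, v, l, _, _, _, hl => by simp [specSeq] at hl
  | p :: L, e', e'', hv, hf, 0, e1, e2, v, l, h1, h2, hmap, hl => by
    obtain ⟨hc1, hc2, hc3, _⟩ := core e' e'' hf p (valid_head hv)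
    simp only [specSeq, List.getElem?_cons_zero, List.getElem?_cons_succ] at h1 h2 hl
    rw [specSeq_fst_head] at h2
    rw [iterDec, List.map_cons, List.getElem?_cons_succ, List.getElem?_map,
      iterDec_head] at hmap
    simp only [Option.map_some] at hmap
    cases h1; cases h2; cases hl; cases hmap
    refine ⟨hc3 _ (coes_toComp _).symm, step_decAt hc1⟩
  | p :: L, e', e'', hv, hf, j + 1, e1, e2, v, l, h1, h2, hmap, hl => by
    obtain ⟨hc1, hc2, hc3, _⟩ := core e' e'' hf p (valid_head hv)
    simp only [specSeq, List.getElem?_cons_succ] at h1 h2 hl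
    rw [iterDec, List.map_cons, List.getElem?_cons_succ] at hmap
    exact spec_main L (decAt e' p) (decAt e'' (normLabel e' e'' p)) (valid_tail hv)
      hc2.symm j e1 e2 v l h1 h2 hmap hl

theorem spec_lex : ∀ (L : List ℕ) (e : List ℕ), Valid e L →
    (specSeq e e L).2 = L ∨ List.Lex (· < ·) ((specSeq e e L).2) L
  | [], e, _ => Or.inl rfl
  | p :: L, e, hv => by
    obtain ⟨hc1, hc2, hc3, hc4⟩ := core e e rfl p (valid_head hv)
    have hqp : normLabel e e p ≤ p := hc4 rfl
    rcases Nat.lt_or_ge (normLabel e e p) p with hlt | hge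
    · right
      simp only [specSeq]
      exact List.Lex.rel hlt
    · have hqp' : normLabel e e p = p := by omega
      simp only [specSeq, hqp']
      rcases spec_lex L (decAt e p) (valid_tail hv) with h | h
      · left; rw [h]
      · right; exact List.Lex.cons h

end CSL

namespace CSL

theorem coes_eq_map (u : List ℕ+) : coes u = u.map PNat.val := by
  induction u with
  | nil => rfl
  | cons a u ih => rw [coes_cons, List.map_cons, ih]

theorem compLE_iff_coes {u w : List ℕ+} :
    CompLE u w ↔ List.SublistForall₂ (· ≤ ·) (coes u) (coes w) := by
  rw [coes_eq_map, coes_eq_map]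
  unfold CompLE
  rw [List.sublistForall₂_iff, List.sublistForall₂_iff]
  constructor
  · rintro ⟨l, hf, hs⟩
    refine ⟨l.map PNat.val, ?_, hs.map _⟩
    rw [List.forall₂_map_left_iff, List.forall₂_map_right_iff]
    exact hf.imp (fun a b h => (PNat.coe_le_coe _ _).mpr h)
  · rintro ⟨l, hf, hs⟩
    rw [List.sublist_map_iff] at hs
    obtain ⟨l', hs', rfl⟩ := hs
    refine ⟨l', ?_, hs'⟩
    rw [List.forall₂_map_left_iff, List.forall₂_map_right_iff] at hf
    exact hf.imp (fun a b h => (PNat.coe_le_coe _ _).mp h)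

theorem forall2_sum_le {x y : List ℕ} (h : List.Forall₂ (· ≤ ·) x y) : x.sum ≤ y.sum := by
  induction h with
  | nil => exact le_refl 0
  | cons hab _ ih => simpa using Nat.add_le_add hab ih

theorem forall2_sum_eq {x y : List ℕ} (h : List.Forall₂ (· ≤ ·) x y) (hs : x.sum = y.sum) :
    x = y := by
  induction h with
  | nil => rfl
  | @cons a b x y hab hf ih =>
    simp only [List.sum_cons] at hs
    have h1 := forall2_sum_le hf
    have ha : a = b := by omega
    rw [ha, ih (by omega)]

theorem sublist_sum_le {x y : List ℕ} (h : List.Sublist x y) : x.sum ≤ y.sum := by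
  induction h with
  | slnil => exact le_refl 0
  | cons a _ ih => simp; omega
  | cons_cons a _ ih => simp; omega

theorem sublist_sum_eq {x y : List ℕ} (h : List.Sublist x y) (hpos : ∀ a ∈ y, a ≠ 0)
    (hs : x.sum = y.sum) : x = y := by
  induction h with
  | slnil => rfl
  | @cons l₁ l₂ a hsub ih =>
    exfalso
    have h1 := sublist_sum_le hsub
    have h2 : a ≠ 0 := hpos a (List.mem_cons_self)
    simp only [List.sum_cons] at hs
    omega
  | @cons_cons l₁ l₂ a hsub ih =>
    simp only [List.sum_cons] at hs
    rw [ih (fun b hb => hpos b (List.mem_cons_of_mem _ hb)) (by omega)]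

theorem coes_pos (w : List ℕ+) : ∀ a ∈ coes w, a ≠ 0 := by
  rw [coes_eq_map]
  intro a ha
  rw [List.mem_map] at ha
  obtain ⟨b, _, rfl⟩ := ha
  exact b.ne_zero

theorem compLE_sum_le {a b : List ℕ+} (h : CompLE a b) : (coes a).sum ≤ (coes b).sum := by
  rw [compLE_iff_coes, List.sublistForall₂_iff] at h
  obtain ⟨l, hf, hs⟩ := h
  exact le_trans (forall2_sum_le hf) (sublist_sum_le hs)

theorem compLE_sum_eq {a b : List ℕ+} (h : CompLE a b) (hs : (coes a).sum = (coes b).sum) :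
    a = b := by
  rw [compLE_iff_coes, List.sublistForall₂_iff] at h
  obtain ⟨l, hf, hsub⟩ := h
  have h1 := forall2_sum_le hf
  have h2 := sublist_sum_le hsub
  have h3 : l = coes b := sublist_sum_eq hsub (coes_pos b) (by omega)
  rw [h3] at hf
  exact coes_inj (forall2_sum_eq hf (by omega))

theorem forall2_set_le : ∀ (F : List ℕ) (m c : ℕ), c ≤ F.getD m 0 →
    List.Forall₂ (· ≤ ·) (F.set m c) F
  | [], _, _, _ => List.Forall₂.nil
  | a :: F, 0, c, hc => List.Forall₂.cons (by simpa using hc) (List.forall₂_refl F)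
  | a :: F, m + 1, c, hc =>
    List.Forall₂.cons (le_refl a) (forall2_set_le F m c (by simpa using hc))

theorem compLE_decAt {e : List ℕ} {p : ℕ} (h : e.getD p 0 ≠ 0) :
    CompLE (toComp (decAt e p)) (toComp e) := by
  rw [compLE_iff_coes, coes_toComp, coes_toComp, List.sublistForall₂_iff]
  rw [filt_decAt e p h]
  obtain ⟨hpl, hmlt, hfv, _⟩ := lemA e p h
  by_cases h1 : e.getD p 0 = 1
  · rw [if_pos h1]
    exact ⟨(filt e).eraseIdx (cnz (e.take p)), List.forall₂_refl _,
      List.eraseIdx_sublist _ _⟩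
  · rw [if_neg h1]
    exact ⟨filt e, forall2_set_le _ _ _ (by rw [hfv]; omega), List.Sublist.refl _⟩

theorem cover_decAt {e : List ℕ} {p : ℕ} (h : e.getD p 0 ≠ 0) :
    CompCovBy (toComp e) (toComp (decAt e p)) := by
  have hsum : (coes (toComp (decAt e p))).sum + 1 = (coes (toComp e)).sum := by
    rw [coes_toComp, coes_toComp]
    exact sum_filt_decAt e p h
  refine ⟨compLE_decAt h, ?_, ?_⟩
  · intro hc
    rw [hc] at hsum
    omega
  · intro v hv1 hv2
    have h1 := compLE_sum_le hv1
    have h2 := compLE_sum_le hv2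
    rcases Nat.lt_or_ge (coes v).sum (coes (toComp e)).sum with h3 | h3
    · left
      exact (compLE_sum_eq hv1 (by omega)).symm
    · right
      exact compLE_sum_eq hv2 (by omega)

theorem iterDec_head? : ∀ (L : List ℕ) (e : List ℕ), (iterDec e L).head? = some e
  | [], _ => rfl
  | _ :: _, _ => rfl

theorem chain'_iterDec : ∀ (L : List ℕ) (e : List ℕ), Valid e L →
    List.Chain' CompCovBy ((iterDec e L).map toComp)
  | [], e, _ => by simp [iterDec]; exact List.isChain_singleton _
  | p :: L, e, hv => by
    rw [iterDec, List.map_cons]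
    refine List.IsChain.cons (chain'_iterDec L _ (valid_tail hv)) ?_
    intro y hy
    rw [List.head?_map, iterDec_head?] at hy
    simp only [Option.map_some, Option.mem_def, Option.some.injEq] at hy
    rw [← hy]
    exact cover_decAt (valid_head hv)

end CSL

namespace CSL

theorem filt_coes (w : List ℕ+) : filt (coes w) = coes w := by
  induction w with
  | nil => rfl
  | cons a u ih => rw [coes_cons, filt_cons, if_neg a.ne_zero, ih]

section Chain

variable {u w : List ℕ+} {vs : List (List ℕ+)} {es : List (List ℕ)} {ls : List ℕ}

theorem chain_es_formula (hl : ChainLabels w vs es ls) :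
    ∀ j, j ≤ ls.length → es[j]? = some (decList (coes w) (ls.take j)) := by
  obtain ⟨hlen1, hlen2, h0, hstep⟩ := hl
  intro j
  induction j with
  | zero => intro _; simpa [decList] using h0
  | succ j ih =>
    intro hj
    have hej := ih (by omega)
    have hlt : j + 1 < es.length := by rw [hlen1, ← hlen2]; omega
    have hltv : j + 1 < vs.length := by rw [← hlen2]; omega
    have hltl : j < ls.length := by omega
    have hst := (hstep j _ es[j+1] vs[j+1] ls[j] hej (List.getElem?_eq_getElem hlt)
      (List.getElem?_eq_getElem hltv) (List.getElem?_eq_getElem hltl)).2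
    have heq := step_unique hst
    rw [List.getElem?_eq_getElem hlt, heq, ← decList_concat]
    congr 2
    rw [List.take_succ, List.getElem?_eq_getElem hltl]
    rfl

theorem chain_valid (hl : ChainLabels w vs es ls) : Valid (coes w) ls := by
  obtain ⟨hlen1, hlen2, h0, hstep⟩ := hl
  have hformula := chain_es_formula ⟨hlen1, hlen2, h0, hstep⟩
  have key : ∀ n j, j + n = ls.length →
      ∀ x, (ls.drop j).count x ≤ (decList (coes w) (ls.take j)).getD x 0 := by
    intro n
    induction n with
    | zero =>
      intro j hj x
      have : j = ls.length := by omega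
      rw [this, List.drop_length]
      exact Nat.zero_le _
    | succ n ih =>
      intro j hj x
      have hjlt : j < ls.length := by omega
      have hlt : j + 1 < es.length := by rw [hlen1, ← hlen2]; omega
      have hltv : j + 1 < vs.length := by rw [← hlen2]; omega
      have hst := (hstep j _ _ vs[j+1] ls[j] (hformula j (by omega))
        (hformula (j+1) (by omega)) (List.getElem?_eq_getElem hltv)
        (List.getElem?_eq_getElem hjlt)).2
      obtain ⟨_, _, a, ha1, _⟩ := hst
      have hgd : (decList (coes w) (ls.take j)).getD (ls[j]) 0 = a + 1 := by
        rw [List.getD_eq_getElem?_getD, ha1]; rfl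
      have hnext := ih (j + 1) (by omega) x
      have htake : ls.take (j+1) = ls.take j ++ [ls[j]] := by
        rw [List.take_succ, List.getElem?_eq_getElem hjlt]; rfl
      rw [htake, decList_concat, decAt_getD] at hnext
      rw [List.drop_eq_getElem_cons hjlt, List.count_cons]
      by_cases hx : x = ls[j]
      · subst hx
        rw [if_pos rfl] at hnext
        simp only [beq_self_eq_true, if_true]
        omega
      · rw [if_neg hx] at hnext
        rw [if_neg (by simp; exact fun hc => hx hc.symm)]
        omega
  intro x
  have := key ls.length 0 (by omega) x
  simpa [decList] using this

theorem chain_last_filt (hl : ChainLabels w vs es ls) (hc : MaxChain u w vs) :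
    filt (decList (coes w) ls) = coes u := by
  obtain ⟨hhead, hlast, _⟩ := hc
  obtain ⟨hlen1, hlen2, h0, hstep⟩ := hl
  rcases ls with _ | ⟨l0, ls'⟩
  case nil =>
    have hv1 : vs.length = 1 := by simp at hlen2; omega
    rw [List.getLast?_eq_getElem?, hv1] at hlast
    rw [List.head?_eq_getElem?] at hhead
    simp only [Nat.sub_self] at hlast
    rw [hhead] at hlast
    cases hlast
    simp [decList, filt_coes]
  case cons =>
    set d := (l0 :: ls').length with hd
    have hdpos : 0 < d := Nat.succ_pos _
    have hlt : d < es.length := by rw [hlen1, ← hlen2]; omega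
    have hltv : d < vs.length := by rw [← hlen2]; omega
    have hltl : d - 1 < (l0 :: ls').length := by omega
    have hvd : vs[d]? = some u := by
      rw [List.getLast?_eq_getElem?] at hlast
      have : vs.length - 1 = d := by omega
      rw [this] at hlast
      exact hlast
    have hform1 := chain_es_formula ⟨hlen1, hlen2, h0, hstep⟩ (d - 1) (by omega)
    have hform2 := chain_es_formula ⟨hlen1, hlen2, h0, hstep⟩ d (le_refl _)
    have hd1 : d - 1 + 1 = d := by omega
    have hst := (hstep (d - 1) _ _ u ((l0 :: ls')[d-1]) hform1
      (by rw [hd1]; exact hform2) (by rw [hd1]; exact hvd)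
      (List.getElem?_eq_getElem hltl)).1
    have := hst.1.2.1
    rw [List.take_length] at hform2 this
    exact this

end Chain

end CSL

/-- Chain Specification Lemma.  Let `C` be a maximal chain of `[u,w]` in ℙ*
with label sequence `ls`, and let `l'` be any permutation of `ls`.  Starting
with the expansion `η_{v'₀} = w` and subtracting `1` from position `l'_j` at
the `j`-th step, one obtains a sequence of expansions `es'` whose underlying
compositions `vs'` form a maximal chain `C'` of `[u,w]` (the chain specified
by `l'`), and the label sequence of `C'` is `≤ l'` in lexicographic order. -/
theorem chain_specification_lemma (u w : List ℕ+)
    (vs : List (List ℕ+)) (es : List (List ℕ)) (ls : List ℕ)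
    (hc : MaxChain u w vs) (hl : ChainLabels w vs es ls)
    (l' : List ℕ) (hperm : ls.Perm l') :
    ∃ (es' : List (List ℕ)) (vs' : List (List ℕ+)) (ls' : List ℕ),
      es'.length = l'.length + 1 ∧
      es'[0]? = some (coes w) ∧
      (∀ (j : ℕ) (e e' : List ℕ) (x : ℕ),
        es'[j]? = some e → es'[j + 1]? = some e' → l'[j]? = some x →
          Step e e' x) ∧
      vs'.length = es'.length ∧
      (∀ (j : ℕ) (v : List ℕ+) (e : List ℕ),
        vs'[j]? = some v → es'[j]? = some e → IsExpansion v e) ∧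
      MaxChain u w vs' ∧
      (∃ es'' : List (List ℕ), ChainLabels w vs' es'' ls') ∧
      (ls' = l' ∨ List.Lex (· < ·) ls' l') := by
  classical
  have hval_ls : CSL.Valid (coes w) ls := CSL.chain_valid hl
  have hval : CSL.Valid (coes w) l' := by
    intro x
    rw [← hperm.count_eq x]
    exact hval_ls x
  refine ⟨CSL.iterDec (coes w) l', (CSL.iterDec (coes w) l').map CSL.toComp,
    (CSL.specSeq (coes w) (coes w) l').2, CSL.iterDec_length l' _, CSL.iterDec_head l' _,
    CSL.iterDec_steps l' _ hval, by rw [List.length_map], ?_, ?_, ?_, ?_⟩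
  · -- expansions
    intro j v e hv he
    rw [List.getElem?_map, he, Option.map_some] at hv
    cases hv
    exact (CSL.coes_toComp e).symm
  · -- MaxChain
    have hdeq : CSL.decList (coes w) l' = CSL.decList (coes w) ls := by
      apply CSL.lists_eq_of_getD
      · rw [CSL.decList_length, CSL.decList_length]
      · intro x
        rw [CSL.decList_getD, CSL.decList_getD, hperm.count_eq x]
    refine ⟨?_, ?_, CSL.chain'_iterDec l' _ hval⟩
    · rw [List.head?_map, CSL.iterDec_head?, Option.map_some, CSL.toComp_coes]
    · rw [List.getLast?_map, CSL.iterDec_getLast, Option.map_some, hdeq,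
        CSL.toComp_eq (CSL.chain_last_filt hl hc)]
  · -- ChainLabels
    refine ⟨(CSL.specSeq (coes w) (coes w) l').1, ?_, ?_, CSL.specSeq_fst_head l' _ _, ?_⟩
    · rw [CSL.specSeq_fst_length, List.length_map, CSL.iterDec_length]
    · rw [CSL.specSeq_snd_length, List.length_map, CSL.iterDec_length]
    · intro j e e' v' l h1 h2 h3 h4
      exact CSL.spec_main l' (coes w) (coes w) hval rfl j e e' v' l h1 h2 h3 h4
  · exact CSL.spec_lex l' (coes w) hval
end
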